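/- arXiv:1901.00996 — 10 statements merged into one kernel-verified Lean document; each statement's English description precedes it below -/
import Mathlib

section
/- Let A be a unital, not necessarily associative ring with involution *, let α be an invertible element of Z(A) with α* = α, and let R = (A,α) be the Cayley–Dickson ring. Then the associative center of R is N(R) = {(x,y) : x ∈ C, y ∈ I}, where C = Z(A) and I = {c ∈ C : c[a,b] = 0 for all a,b ∈ A}. -/
set_option linter.unusedSectionVars false

/-- The associator `(a,b,c) = (ab)c - a(bc)` in a not necessarily associative ring. -/
def naAssociator {R : Type*} [NonAssocRing R] (a b c : R) : R := a * b * c - a * (b * c)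

/-- The commutator `[a,b] = ab - ba` in a not necessarily associative ring. -/
def naCommutator {R : Type*} [NonAssocRing R] (a b : R) : R := a * b - b * a

/-- The associative center `N(R)`. -/
def assocCenter (R : Type*) [NonAssocRing R] : Set R :=
  {x | ∀ a b : R, naAssociator x a b = 0 ∧ naAssociator a x b = 0 ∧ naAssociator a b x = 0}

/-- The commutative center `K(R)`. -/
def commCenter (R : Type*) [NonAssocRing R] : Set R :=
  {x | ∀ a : R, naCommutator x a = 0}

/-- The center `Z(R) = N(R) ∩ K(R)`. -/
def ringCenter (R : Type*) [NonAssocRing R] : Set R :=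
  assocCenter R ∩ commCenter R

/-- A ring is centrally essential if for every nonzero `r` there is a central `z`
with `z * r ≠ 0` central. -/
def IsCentrallyEssential (R : Type*) [NonAssocRing R] : Prop :=
  ∀ r : R, r ≠ 0 → ∃ z ∈ ringCenter R, z * r ≠ 0 ∧ z * r ∈ ringCenter R

/-- A ring is left `N`-essential. -/
def IsLeftNEssential (R : Type*) [NonAssocRing R] : Prop :=
  ∀ r : R, r ≠ 0 → ∃ n ∈ assocCenter R, n * r ≠ 0 ∧ n * r ∈ assocCenter R

/-- A ring is right `N`-essential. -/
def IsRightNEssential (R : Type*) [NonAssocRing R] : Prop :=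
  ∀ r : R, r ≠ 0 → ∃ n ∈ assocCenter R, r * n ≠ 0 ∧ r * n ∈ assocCenter R

/-- `I` is an essential ideal of `B` (elementwise formulation). -/
def EssentialIn {R : Type*} [NonAssocRing R] (I B : Set R) : Prop :=
  ∀ b ∈ B, b ≠ 0 → ∃ d ∈ B, d * b ≠ 0 ∧ d * b ∈ I

/-- The Cayley–Dickson ring `(A, α)`: the abelian group `A ⊕ A` with multiplication
`(a₁,a₂)(a₃,a₄) = (a₁a₃ + α(a₄a₂*), a₁*a₄ + a₃a₂)`. -/
@[ext]
structure CD (A : Type*) (α : A) : Type _ where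
  re : A
  im : A

namespace CD

variable {A : Type*} [NonAssocRing A] [StarRing A] {α : A}

instance : Zero (CD A α) := ⟨⟨0, 0⟩⟩
instance : Add (CD A α) := ⟨fun z w => ⟨z.re + w.re, z.im + w.im⟩⟩
instance : Neg (CD A α) := ⟨fun z => ⟨-z.re, -z.im⟩⟩
instance : One (CD A α) := ⟨⟨1, 0⟩⟩
instance : Mul (CD A α) :=
  ⟨fun z w => ⟨z.re * w.re + α * (w.im * star z.im), star z.re * w.im + w.re * z.im⟩⟩
instance : Star (CD A α) := ⟨fun z => ⟨star z.re, -z.im⟩⟩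

@[simp] theorem zero_re : (0 : CD A α).re = 0 := rfl
@[simp] theorem zero_im : (0 : CD A α).im = 0 := rfl
@[simp] theorem one_re : (1 : CD A α).re = 1 := rfl
@[simp] theorem one_im : (1 : CD A α).im = 0 := rfl
@[simp] theorem add_re (z w : CD A α) : (z + w).re = z.re + w.re := rfl
@[simp] theorem add_im (z w : CD A α) : (z + w).im = z.im + w.im := rfl
@[simp] theorem neg_re (z : CD A α) : (-z).re = -z.re := rfl
@[simp] theorem neg_im (z : CD A α) : (-z).im = -z.im := rfl
@[simp] theorem mul_re (z w : CD A α) :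
    (z * w).re = z.re * w.re + α * (w.im * star z.im) := rfl
@[simp] theorem mul_im (z w : CD A α) :
    (z * w).im = star z.re * w.im + w.re * z.im := rfl
@[simp] theorem star_re (z : CD A α) : (star z).re = star z.re := rfl
@[simp] theorem star_im (z : CD A α) : (star z).im = -z.im := rfl
@[simp] theorem mk_re (x y : A) : (⟨x, y⟩ : CD A α).re = x := rfl
@[simp] theorem mk_im (x y : A) : (⟨x, y⟩ : CD A α).im = y := rfl

instance : NonAssocRing (CD A α) where
  add_assoc a b c := by ext <;> simp [add_assoc]
  zero_add a := by ext <;> simp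
  add_zero a := by ext <;> simp
  add_comm a b := by ext <;> simp [add_comm]
  neg_add_cancel a := by ext <;> simp
  nsmul := nsmulRec
  zsmul := zsmulRec
  left_distrib a b c := by ext <;> simp [mul_add, add_mul] <;> abel
  right_distrib a b c := by ext <;> simp [mul_add, add_mul, star_add] <;> abel
  zero_mul a := by ext <;> simp
  mul_zero a := by ext <;> simp
  one_mul a := by ext <;> simp
  mul_one a := by ext <;> simp

instance {A : Type*} {α : A} [Finite A] : Finite (CD A α) :=
  Finite.of_injective (fun z : CD A α => (z.re, z.im))
    (fun z w h => by cases z; cases w; simpa using h)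

/-- If `α` commutes with every element and `star α = α`, then `(a,b) ↦ (a*, -b)`
makes `(A, α)` a star ring. -/
def starRing (h : ∀ t : A, α * t = t * α) (hs : star α = α) : StarRing (CD A α) where
  star := star
  star_involutive z := by ext <;> simp
  star_mul z w := by
    ext <;>
      simp [StarMul.star_mul, star_star, StarAddMonoid.star_add, star_neg, hs, h, mul_neg, neg_mul,
        neg_add] <;>
      abel
  star_add z w := by ext <;> simp [StarAddMonoid.star_add, neg_add] <;> abel

/-- An element of the form `(x, 0)` with `x` commuting with everything and `star x = x`
commutes with every element of `(A, α)`. -/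
theorem mk_zero_comm {x : A} (hx : ∀ t : A, x * t = t * x) (hsx : star x = x) (z : CD A α) :
    (⟨x, 0⟩ : CD A α) * z = z * ⟨x, 0⟩ := by
  ext <;> simp [hsx, hx]

end CD

section Helpers

variable {A : Type*} [NonAssocRing A]

theorem cen_comm {c : A} (hc : c ∈ ringCenter A) (a : A) : c * a = a * c := by
  have h := hc.2 a
  rw [naCommutator, sub_eq_zero] at h
  exact h

theorem cen_l {c : A} (hc : c ∈ ringCenter A) (a b : A) : c * a * b = c * (a * b) := by
  have h := (hc.1 a b).1
  rw [naAssociator, sub_eq_zero] at h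
  exact h

theorem cen_m {c : A} (hc : c ∈ ringCenter A) (a b : A) : a * c * b = a * (c * b) := by
  have h := (hc.1 a b).2.1
  rw [naAssociator, sub_eq_zero] at h
  exact h

theorem cen_r {c : A} (hc : c ∈ ringCenter A) (a b : A) : a * b * c = a * (b * c) := by
  have h := (hc.1 a b).2.2
  rw [naAssociator, sub_eq_zero] at h
  exact h

theorem cen_pull {c : A} (hc : c ∈ ringCenter A) (a b : A) :
    a * (c * b) = c * (a * b) := by
  rw [← cen_m hc, show a * c = c * a from (cen_comm hc a).symm, cen_l hc]

theorem cen_pull' {c : A} (hc : c ∈ ringCenter A) (a b : A) :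
    a * (b * c) = c * (a * b) := by
  rw [← cen_r hc, cen_comm hc]

theorem cen_pull'' {c : A} (hc : c ∈ ringCenter A) (a b : A) :
    a * c * b = c * (a * b) := by
  rw [show a * c = c * a from (cen_comm hc a).symm, cen_l hc]

theorem mem_ringCenter_iff {c : A} :
    c ∈ ringCenter A ↔ (∀ a, c * a = a * c) ∧ (∀ a b, c * a * b = c * (a * b)) ∧
      (∀ a b, a * c * b = a * (c * b)) ∧ (∀ a b, a * b * c = a * (b * c)) := by
  constructor
  · exact fun hc => ⟨cen_comm hc, cen_l hc, cen_m hc, cen_r hc⟩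
  · rintro ⟨h1, h2, h3, h4⟩
    exact ⟨fun a b => ⟨by rw [naAssociator, sub_eq_zero]; exact h2 a b,
      by rw [naAssociator, sub_eq_zero]; exact h3 a b,
      by rw [naAssociator, sub_eq_zero]; exact h4 a b⟩,
      fun a => by rw [naCommutator, sub_eq_zero]; exact h1 a⟩

variable [StarRing A]

theorem comm_of_star_comm {c : A} (h : ∀ a, star c * a = a * star c) (a : A) :
    c * a = a * c := by
  have h2 := h (star a)
  have := congrArg star h2
  simpa [star_mul] using this.symm

theorem star_mem_ringCenter {c : A} (hc : c ∈ ringCenter A) : star c ∈ ringCenter A := by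
  rw [mem_ringCenter_iff]
  refine ⟨?_, ?_, ?_, ?_⟩
  · intro a
    have := congrArg star (cen_comm hc (star a))
    simpa [star_mul] using this.symm
  · intro a b
    have := congrArg star (cen_r hc (star b) (star a))
    simpa [star_mul] using this.symm
  · intro a b
    have := congrArg star (cen_m hc (star b) (star a))
    simpa [star_mul] using this.symm
  · intro a b
    have := congrArg star (cen_l hc (star b) (star a))
    simpa [star_mul] using this.symm

theorem star_kills_comm {c : A} (hc : c ∈ ringCenter A)
    (h : ∀ a b : A, c * naCommutator a b = 0) (a b : A) :
    star c * naCommutator a b = 0 := by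
  have hsc := star_mem_ringCenter hc
  have e1 : star c * (a * b) = star (c * (star b * star a)) := by
    rw [star_mul, star_mul, star_star, star_star, cen_comm hsc]
  have e2 : star c * (b * a) = star (c * (star a * star b)) := by
    rw [star_mul, star_mul, star_star, star_star, cen_comm hsc]
  have h3 := h (star b) (star a)
  rw [naCommutator, mul_sub, sub_eq_zero] at h3
  rw [naCommutator, mul_sub, e1, e2, h3, sub_self]

end Helpers

theorem cen_pull3 {A : Type*} [NonAssocRing A] {c : A} (hc : c ∈ ringCenter A) (a b : A) :
    a * b * c = c * (a * b) := (cen_comm hc (a * b)).symm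

theorem cen_swap {A : Type*} [NonAssocRing A] {c : A} (hc : c ∈ ringCenter A) (a : A) :
    a * c = c * a := (cen_comm hc a).symm

theorem mkre_mem {A : Type*} [NonAssocRing A] [StarRing A] {α : A}
    (hαc : α ∈ ringCenter A) (hαs : star α = α)
    {x : A} (hx : x ∈ ringCenter A) :
    (⟨x, 0⟩ : CD A α) ∈ assocCenter (CD A α) := by
  have hx' := star_mem_ringCenter hx
  rintro ⟨a, b⟩ ⟨c, d⟩
  refine ⟨?_, ?_, ?_⟩ <;>
  · rw [naAssociator, sub_eq_zero]
    ext <;>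
    · simp only [CD.mul_re, CD.mul_im, CD.mk_re, CD.mk_im, star_mul, star_zero, mul_zero,
        zero_mul, add_zero, zero_add, star_star, hαs]
      try simp only [mul_add, add_mul]
      try simp only [cen_l hx, cen_pull hx, cen_pull' hx, cen_pull'' hx, cen_pull3 hx, cen_swap hx,
        cen_l hx', cen_pull hx', cen_pull' hx', cen_pull'' hx', cen_pull3 hx', cen_swap hx']
      try simp only [cen_l hαc, cen_pull hαc, cen_pull' hαc, cen_pull'' hαc, cen_pull3 hαc,
        cen_swap hαc]

theorem mkim_mem {A : Type*} [NonAssocRing A] [StarRing A] {α : A}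
    (hαc : α ∈ ringCenter A) (hαs : star α = α)
    {y : A} (hy : y ∈ ringCenter A) (hyc : ∀ a b : A, y * naCommutator a b = 0) :
    (⟨0, y⟩ : CD A α) ∈ assocCenter (CD A α) := by
  have hy' := star_mem_ringCenter hy
  have hswap : ∀ a b : A, y * (a * b) = y * (b * a) := by
    intro a b
    have := hyc a b
    rw [naCommutator, mul_sub, sub_eq_zero] at this
    exact this
  have hswap' : ∀ a b : A, star y * (a * b) = star y * (b * a) := by
    intro a b
    have := star_kills_comm hy hyc a b
    rw [naCommutator, mul_sub, sub_eq_zero] at this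
    exact this
  rintro ⟨a, b⟩ ⟨c, d⟩
  refine ⟨?_, ?_, ?_⟩ <;>
  · rw [naAssociator, sub_eq_zero]
    ext <;>
    · simp only [CD.mul_re, CD.mul_im, CD.mk_re, CD.mk_im, star_mul, star_zero, mul_zero,
        zero_mul, add_zero, zero_add, star_star, star_add, hαs]
      try simp only [mul_add, add_mul]
      try simp only [cen_l hy, cen_pull hy, cen_pull' hy, cen_pull'' hy, cen_pull3 hy, cen_swap hy,
        cen_l hy', cen_pull hy', cen_pull' hy', cen_pull'' hy', cen_pull3 hy', cen_swap hy']
      try simp only [cen_l hαc, cen_pull hαc, cen_pull' hαc, cen_pull'' hαc, cen_pull3 hαc,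
        cen_swap hαc]
      try simp only [hswap, hswap']
      try abel

theorem naAssociator_add₁ {R : Type*} [NonAssocRing R] (p q a b : R) :
    naAssociator (p + q) a b = naAssociator p a b + naAssociator q a b := by
  simp only [naAssociator, add_mul, mul_add]; abel

theorem naAssociator_add₂ {R : Type*} [NonAssocRing R] (p q a b : R) :
    naAssociator a (p + q) b = naAssociator a p b + naAssociator a q b := by
  simp only [naAssociator, add_mul, mul_add]; abel

theorem naAssociator_add₃ {R : Type*} [NonAssocRing R] (p q a b : R) :
    naAssociator a b (p + q) = naAssociator a b p + naAssociator a b q := by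
  simp only [naAssociator, add_mul, mul_add]; abel

theorem stmt0 {A : Type*} [NonAssocRing A] [StarRing A] {α : A}
    (hαc : α ∈ ringCenter A) (hαu : ∃ β : A, α * β = 1 ∧ β * α = 1) (hαs : star α = α) :
    assocCenter (CD A α) =
      {z : CD A α | z.re ∈ ringCenter A ∧
        (z.im ∈ ringCenter A ∧ ∀ a b : A, z.im * naCommutator a b = 0)} := by
  obtain ⟨β, hβ1, hβ2⟩ := hαu
  have hcancel : ∀ s t : A, α * s = α * t → s = t := by
    intro s t h
    have h2 : β * (α * s) = β * (α * t) := by rw [h]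
    rwa [← cen_m hαc, ← cen_m hαc, hβ2, one_mul, one_mul] at h2
  ext z
  simp only [Set.mem_setOf_eq]
  constructor
  · intro h
    set x := z.re with hxdef
    set y := z.im with hydef
    have key : ∀ p q r : CD A α, naAssociator p q r = 0 →
        (p * q * r).re = (p * (q * r)).re ∧ (p * q * r).im = (p * (q * r)).im := by
      intro p q r e
      rw [naAssociator, sub_eq_zero] at e
      exact ⟨congrArg CD.re e, congrArg CD.im e⟩
    -- from u = (a,0), v = (b,0)
    have hxN1 : ∀ a b : A, x * a * b = x * (a * b) := by
      intro a b
      have h' := (key _ _ _ (h ⟨a, 0⟩ ⟨b, 0⟩).1).1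
      simpa [hαs] using h'
    have hP : ∀ a b : A, b * (a * y) = a * b * y := by
      intro a b
      have h' := (key _ _ _ (h ⟨a, 0⟩ ⟨b, 0⟩).1).2
      simpa [hαs] using h'
    have hxN2 : ∀ a b : A, a * x * b = a * (x * b) := by
      intro a b
      have h' := (key _ _ _ (h ⟨a, 0⟩ ⟨b, 0⟩).2.1).1
      simpa [hαs] using h'
    have hH3 : ∀ a b : A, b * (a * y) = a * (b * y) := by
      intro a b
      have h' := (key _ _ _ (h ⟨star a, 0⟩ ⟨b, 0⟩).2.1).2
      simpa [hαs] using h'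
    have hxN3 : ∀ a b : A, a * b * x = a * (b * x) := by
      intro a b
      have h' := (key _ _ _ (h ⟨a, 0⟩ ⟨b, 0⟩).2.2).1
      simpa [hαs] using h'
    -- from u = (0,1), v = (a,0)
    have hG1 : ∀ a : A, α * star y * a = α * (a * star y) := by
      intro a
      have h' := (key _ _ _ (h ⟨0, 1⟩ ⟨a, 0⟩).1).1
      simpa [hαs] using h'
    have hG2 : ∀ a : A, star x * a = a * star x := by
      intro a
      have h' := (key _ _ _ (h ⟨0, 1⟩ ⟨a, 0⟩).1).2
      simpa [hαs] using h'.symm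
    -- from u = (0,a), v = (0,b)
    have hQraw : ∀ a b : A, y * star a * α * b = α * (b * star a) * y := by
      intro a b
      have h' := (key _ _ _ (h ⟨0, a⟩ ⟨0, b⟩).1).2
      simpa [hαs] using h'
    have hQ : ∀ b c : A, y * c * b = b * c * y := by
      intro b c
      have h' := hQraw (star c) b
      rw [star_star] at h'
      apply hcancel
      calc α * (y * c * b) = α * (y * c) * b := (cen_l hαc _ _).symm
        _ = y * c * α * b := by rw [cen_pull3 hαc]
        _ = α * (b * c) * y := h'
        _ = α * (b * c * y) := by rw [cen_l hαc]
    have hxK : ∀ a : A, x * a = a * x := comm_of_star_comm hG2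
    have hyK' : ∀ a : A, star y * a = a * star y := by
      intro a
      apply hcancel
      rw [← cen_l hαc]
      exact hG1 a
    have hyK : ∀ a : A, y * a = a * y := comm_of_star_comm hyK'
    have hxC : x ∈ ringCenter A := mem_ringCenter_iff.mpr ⟨hxK, hxN1, hxN2, hxN3⟩
    have hyN1 : ∀ a b : A, y * a * b = y * (a * b) := by
      intro a b
      calc y * a * b = b * a * y := hQ b a
        _ = a * (b * y) := (hP b a).symm
        _ = a * b * y := (hH3 a b).symm.trans (hP a b)
        _ = y * (a * b) := (hyK (a * b)).symm
    have hyN3 : ∀ a b : A, a * b * y = a * (b * y) := fun a b =>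
      (hP a b).symm.trans (hH3 a b)
    have hyN2 : ∀ a b : A, a * y * b = a * (y * b) := by
      intro a b
      calc a * y * b = y * a * b := by rw [← hyK a]
        _ = y * (a * b) := hyN1 a b
        _ = a * b * y := hyK (a * b)
        _ = a * (b * y) := hyN3 a b
        _ = a * (y * b) := by rw [← hyK b]
    have hyC : y ∈ ringCenter A := mem_ringCenter_iff.mpr ⟨hyK, hyN1, hyN2, hyN3⟩
    have hkill : ∀ a b : A, y * naCommutator a b = 0 := by
      intro a b
      rw [naCommutator, mul_sub, sub_eq_zero]
      calc y * (a * b) = a * b * y := hyK (a * b)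
        _ = b * (a * y) := (hP a b).symm
        _ = a * (b * y) := hH3 a b
        _ = b * a * y := hP b a
        _ = y * (b * a) := (hyK (b * a)).symm
    exact ⟨hxC, hyC, hkill⟩
  · rintro ⟨hx, hy, hyc⟩
    have h1 := mkre_mem hαc hαs hx
    have h2 := mkim_mem hαc hαs hy hyc
    have hz : z = (⟨z.re, 0⟩ + ⟨0, z.im⟩ : CD A α) := by ext <;> simp
    intro u v
    refine ⟨?_, ?_, ?_⟩
    · rw [hz, naAssociator_add₁, (h1 u v).1, (h2 u v).1, add_zero]
    · rw [hz, naAssociator_add₂, (h1 u v).2.1, (h2 u v).2.1, add_zero]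
    · rw [hz, naAssociator_add₃, (h1 u v).2.2, (h2 u v).2.2, add_zero]
end

section
/- Let A be a unital, not necessarily associative ring with involution *, let α be an invertible element of Z(A) with α* = α, let C = Z(A) and I = {c ∈ C : c[a,b] = 0 for all a,b ∈ A}, and let R = (A,α) be the Cayley–Dickson ring. Then R is left N-essential if and only if A is centrally essential and I is an essential ideal of the commutative associative ring C. -/
set_option linter.unusedSectionVars false

section Basics
variable {A : Type*} [NonAssocRing A] [StarRing A]

namespace ZC

theorem comm {z : A} (hz : z ∈ ringCenter A) (a : A) : z * a = a * z :=
  sub_eq_zero.mp (hz.2 a)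

theorem nl {z : A} (hz : z ∈ ringCenter A) (a b : A) : z * a * b = z * (a * b) :=
  sub_eq_zero.mp ((hz.1 a b).1)

theorem nm {z : A} (hz : z ∈ ringCenter A) (a b : A) : a * z * b = a * (z * b) :=
  sub_eq_zero.mp ((hz.1 a b).2.1)

theorem nr {z : A} (hz : z ∈ ringCenter A) (a b : A) : a * b * z = a * (b * z) :=
  sub_eq_zero.mp ((hz.1 a b).2.2)

-- pull-out lemmas: z leftmost
theorem p1 {z : A} (hz : z ∈ ringCenter A) (a b : A) : a * (z * b) = z * (a * b) := by
  rw [← nm hz, ← comm hz, nl hz]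
theorem p2 {z : A} (hz : z ∈ ringCenter A) (a b : A) : z * a * b = z * (a * b) := nl hz a b
theorem p3 {z : A} (hz : z ∈ ringCenter A) (a b : A) : a * z * b = z * (a * b) := by
  rw [← comm hz, p2 hz]
theorem p4 {z : A} (hz : z ∈ ringCenter A) (a b : A) : a * b * z = z * (a * b) := by
  rw [nr hz, ← comm hz, p1 hz]
theorem p5 {z : A} (hz : z ∈ ringCenter A) (a b : A) : a * (b * z) = z * (a * b) := by
  rw [← nr hz, p4 hz]
theorem p6 {z : A} (hz : z ∈ ringCenter A) (a : A) : a * z = z * a := (comm hz a).symm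

theorem star_mem {z : A} (hz : z ∈ ringCenter A) : star z ∈ ringCenter A := by
  constructor
  · intro a b
    refine ⟨?_, ?_, ?_⟩ <;> unfold naAssociator <;> rw [sub_eq_zero]
    · calc star z * a * b = star (star b * (star a * z)) := by simp [star_mul]
        _ = star (star b * star a * z) := by rw [nr hz]
        _ = star z * (a * b) := by simp [star_mul]
    · calc a * star z * b = star (star b * (z * star a)) := by simp [star_mul]
        _ = star (star b * z * star a) := by rw [nm hz]
        _ = a * (star z * b) := by simp [star_mul]
    · calc a * b * star z = star (z * (star b * star a)) := by simp [star_mul]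
        _ = star (z * star b * star a) := by rw [nl hz]
        _ = a * (b * star z) := by simp [star_mul]
  · intro a
    unfold naCommutator
    rw [sub_eq_zero]
    calc star z * a = star (star a * z) := by simp [star_mul]
      _ = star (z * star a) := by rw [← comm hz]
      _ = a * star z := by simp [star_mul]

theorem mul_mem {z w : A} (hz : z ∈ ringCenter A) (hw : w ∈ ringCenter A) :
    z * w ∈ ringCenter A := by
  constructor
  · intro s t
    refine ⟨?_, ?_, ?_⟩ <;> unfold naAssociator <;> rw [sub_eq_zero]
    · rw [nl hz, nl hz, nl hw, nl hz]
    · rw [p1 hz, nl hz, nm hw, nl hz, p1 hz]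
    · rw [p1 hz, nr hw, p1 hz, p1 hz]
  · intro a
    unfold naCommutator
    rw [sub_eq_zero, nl hz, comm hw, p1 hz]

theorem zero_mem : (0 : A) ∈ ringCenter A := by
  constructor
  · intro a b; refine ⟨?_, ?_, ?_⟩ <;> simp [naAssociator]
  · intro a; simp [naCommutator]

end ZC
end Basics

section ISet
variable {A : Type*} [NonAssocRing A] [StarRing A]
namespace ZC

theorem swap {u : A} (hu2 : ∀ a b : A, u * naCommutator a b = 0) (a b : A) :
    u * (a * b) = u * (b * a) := by
  have := hu2 a b
  unfold naCommutator at this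
  rw [mul_sub, sub_eq_zero] at this
  exact this

theorem star_kill {u : A} (hu1 : u ∈ ringCenter A) (hu2 : ∀ a b : A, u * naCommutator a b = 0)
    (s t : A) : star u * naCommutator s t = 0 := by
  have h1 : star u * naCommutator s t = star (star (naCommutator s t) * u) := by
    rw [star_mul, star_star]
  rw [h1, ← comm hu1, show star (naCommutator s t) = naCommutator (star t) (star s) from by
    simp [naCommutator, star_sub, star_mul], hu2, star_zero]

theorem cmul_kill {s u : A} (hs : s ∈ ringCenter A) (hu2 : ∀ a b : A, u * naCommutator a b = 0)
    (a b : A) : (s * u) * naCommutator a b = 0 := by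
  rw [nl hs, hu2, mul_zero]

end ZC
end ISet

section Mem
variable {A : Type*} [NonAssocRing A] [StarRing A] {α : A}
open ZC

theorem memN_bwd (hαc : α ∈ ringCenter A) (hαs : star α = α) (c u : A)
    (hc : c ∈ ringCenter A) (hu : u ∈ ringCenter A)
    (hu2 : ∀ a b : A, u * naCommutator a b = 0) :
    (⟨c, u⟩ : CD A α) ∈ assocCenter (CD A α) := by
  intro z w
  obtain ⟨a, b⟩ := z
  obtain ⟨e, d⟩ := w
  have hc' := star_mem hc
  have hu' := star_mem hu
  have hu2' := star_kill hu hu2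
  refine ⟨?_, ?_, ?_⟩ <;> (unfold naAssociator; rw [sub_eq_zero]) <;> apply CD.ext <;>
      simp only [CD.mul_re, CD.mul_im, CD.mk_re, CD.mk_im, star_add, star_mul, star_star, hαs,
        mul_add, add_mul] <;>
      simp only [p1 hc, p2 hc, p3 hc, p4 hc, p5 hc, p6 hc,
        p1 hc', p2 hc', p3 hc', p4 hc', p5 hc', p6 hc',
        p1 hu, p2 hu, p3 hu, p4 hu, p5 hu, p6 hu,
        p1 hu', p2 hu', p3 hu', p4 hu', p5 hu', p6 hu'] <;>
      simp only [p1 hαc, p2 hαc, p3 hαc, p4 hαc, p5 hαc, p6 hαc]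
  · rw [swap hu2' b e, swap hu2' d (star a)]; abel
  · rw [swap hu2 (star b) d, swap hu2 e a]; abel
  · rw [swap hu2 (star b) e, swap hu2' d a]; abel
  · rw [swap hu2' b d, swap hu2 e (star a)]; abel
  · rw [swap hu2 (star d) a, swap hu2 (star b) (star e)]; abel
  · rw [swap hu2 (star e) (star a), swap hu2 b (star d)]; abel
end Mem

section Fwd
variable {A : Type*} [NonAssocRing A] [StarRing A] {α : A}
open ZC

theorem memN_fwd (hαc : α ∈ ringCenter A) (hαu : ∃ β : A, α * β = 1 ∧ β * α = 1)
    (hαs : star α = α) (c u : A)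
    (h : (⟨c, u⟩ : CD A α) ∈ assocCenter (CD A α)) :
    c ∈ ringCenter A ∧ u ∈ ringCenter A ∧ ∀ a b : A, u * naCommutator a b = 0 := by
  have hcan : ∀ s t : A, α * s = α * t → s = t := by
    obtain ⟨β, hβ1, hβ2⟩ := hαu
    intro s t hst
    have h2 : β * α * s = β * α * t := by rw [nm hαc, nm hαc, hst]
    rwa [hβ2, one_mul, one_mul] at h2
  have extract1 : ∀ (z w : CD A α), (⟨c,u⟩ : CD A α) * z * w = ⟨c,u⟩ * (z * w) := by
    intro z w
    have h1 := (h z w).1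
    unfold naAssociator at h1
    rwa [sub_eq_zero] at h1
  have extract2 : ∀ (z w : CD A α), z * ⟨c,u⟩ * w = z * ((⟨c,u⟩ : CD A α) * w) := by
    intro z w
    have h1 := (h z w).2.1
    unfold naAssociator at h1
    rwa [sub_eq_zero] at h1
  have extract3 : ∀ (z w : CD A α), z * w * ⟨c,u⟩ = z * (w * (⟨c,u⟩ : CD A α)) := by
    intro z w
    have h1 := (h z w).2.2
    unfold naAssociator at h1
    rwa [sub_eq_zero] at h1
  -- E1 : z = ⟨a,0⟩, w = ⟨b,0⟩
  have hNl : ∀ a b : A, c * a * b = c * (a * b) := by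
    intro a b
    have h1 := congrArg CD.re (extract1 ⟨a,0⟩ ⟨b,0⟩)
    simpa using h1
  have hNm : ∀ a b : A, a * c * b = a * (c * b) := by
    intro a b
    have h1 := congrArg CD.re (extract2 ⟨a,0⟩ ⟨b,0⟩)
    simpa using h1
  have hNr : ∀ a b : A, a * b * c = a * (b * c) := by
    intro a b
    have h1 := congrArg CD.re (extract3 ⟨a,0⟩ ⟨b,0⟩)
    simpa using h1
  have hF1 : ∀ s t : A, t * (s * u) = s * t * u := by
    intro s t
    have h1 := congrArg CD.im (extract1 ⟨s,0⟩ ⟨t,0⟩)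
    simpa using h1
  have hF2 : ∀ s t : A, t * (s * u) = s * (t * u) := by
    intro s t
    have h1 := congrArg CD.im (extract2 ⟨star s,0⟩ ⟨t,0⟩)
    simpa using h1
  have hF3 : ∀ s t : A, t * s * u = s * (t * u) := by
    intro s t
    have h1 := congrArg CD.im (extract3 ⟨star s,0⟩ ⟨star t,0⟩)
    simpa using h1
  -- E2 : z = ⟨0,b⟩, w = ⟨0,d⟩
  have hKc : ∀ d : A, d * c = c * d := by
    intro d
    have h1 := congrArg CD.re (extract1 ⟨0,(1:A)⟩ ⟨0,d⟩)
    simp only [CD.mul_re, CD.mul_im, CD.mk_re, CD.mk_im, star_one, star_zero, mul_zero, zero_mul,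
      mul_one, one_mul, add_zero, zero_add, star_mul, star_star] at h1
    rw [p1 hαc] at h1
    exact hcan _ _ h1
  have hKu : ∀ d : A, u * d = d * u := by
    intro d
    have h1 := congrArg CD.im (extract1 ⟨0,(1:A)⟩ ⟨0,d⟩)
    simp only [CD.mul_re, CD.mul_im, CD.mk_re, CD.mk_im, star_one, star_zero, mul_zero, zero_mul,
      mul_one, one_mul, add_zero, zero_add, star_mul, star_star, hαs] at h1
    rw [p3 hαc, p2 hαc] at h1
    exact hcan _ _ h1
  -- E3 : z = ⟨0,b⟩, w = ⟨e,0⟩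
  have hL1 : ∀ s t : A, u * s * t = t * u * s := by
    intro s t
    have h1 := congrArg CD.re (extract2 ⟨0, star s⟩ ⟨t,0⟩)
    simp only [CD.mul_re, CD.mul_im, CD.mk_re, CD.mk_im, star_zero, mul_zero, zero_mul,
      add_zero, zero_add, star_mul, star_star] at h1
    rw [p2 hαc] at h1
    exact hcan _ _ h1
  have hL2 : ∀ s t : A, u * (s * t) = t * u * s := by
    intro s t
    have h1 := congrArg CD.re (extract3 ⟨0, star s⟩ ⟨star t,0⟩)
    simp only [CD.mul_re, CD.mul_im, CD.mk_re, CD.mk_im, star_zero, mul_zero, zero_mul,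
      add_zero, zero_add, star_mul, star_star] at h1
    exact hcan _ _ h1
  -- E4 : z = ⟨a,0⟩, w = ⟨0,d⟩
  have hM1 : ∀ s t : A, u * (s * t) = t * (u * s) := by
    intro s t
    have h1 := congrArg CD.re (extract3 ⟨t,0⟩ ⟨0, star s⟩)
    simp only [CD.mul_re, CD.mul_im, CD.mk_re, CD.mk_im, star_zero, mul_zero, zero_mul,
      add_zero, zero_add, star_mul, star_star] at h1
    rw [p1 hαc] at h1
    exact hcan _ _ h1
  -- assembly
  have hNru : ∀ s t : A, s * t * u = s * (t * u) := by
    intro s t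
    rw [← hF1 s t, hF2 s t]
  have hswap : ∀ s t : A, u * (s * t) = u * (t * s) := by
    intro s t
    rw [hKu (s*t), hKu (t*s), ← hF1 s t, hF2 s t, ← hF3 s t]
  have hNlu : ∀ s t : A, u * s * t = u * (s * t) := by
    intro s t
    rw [hL1 s t, ← hL2 s t]
  have hNmu : ∀ s t : A, s * u * t = s * (u * t) := by
    intro s t
    rw [← hKu s, hNlu s t, hswap s t, hM1 t s]
  constructor
  · exact ⟨fun a b => ⟨by unfold naAssociator; rw [sub_eq_zero]; exact hNl a b,
      by unfold naAssociator; rw [sub_eq_zero]; exact hNm a b,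
      by unfold naAssociator; rw [sub_eq_zero]; exact hNr a b⟩,
      fun a => by unfold naCommutator; rw [sub_eq_zero]; exact (hKc a).symm⟩
  constructor
  · exact ⟨fun a b => ⟨by unfold naAssociator; rw [sub_eq_zero]; exact hNlu a b,
      by unfold naAssociator; rw [sub_eq_zero]; exact hNmu a b,
      by unfold naAssociator; rw [sub_eq_zero]; exact hNru a b⟩,
      fun a => by unfold naCommutator; rw [sub_eq_zero]; exact hKu a⟩
  · intro a b
    unfold naCommutator
    rw [mul_sub, hswap a b, sub_self]
end Fwd

theorem stmt1 {A : Type*} [NonAssocRing A] [StarRing A] {α : A}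
    (hαc : α ∈ ringCenter A) (hαu : ∃ β : A, α * β = 1 ∧ β * α = 1) (hαs : star α = α) :
    IsLeftNEssential (CD A α) ↔
      IsCentrallyEssential A ∧
        EssentialIn {c : A | c ∈ ringCenter A ∧ ∀ a b : A, c * naCommutator a b = 0}
          (ringCenter A) := by
  constructor
  · intro hN
    constructor
    · -- A is centrally essential
      intro a ha
      obtain ⟨n, hnN, hnr0, hnrN⟩ := hN ⟨a, 0⟩ (fun h0 => ha (congrArg CD.re h0))
      obtain ⟨cn, un⟩ := n
      obtain ⟨hc, hu, hu2⟩ := memN_fwd hαc hαu hαs _ _ hnN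
      have hprod : (⟨cn, un⟩ : CD A α) * ⟨a, 0⟩ = ⟨cn * a, a * un⟩ := by
        ext <;> simp
      rw [hprod] at hnr0 hnrN
      obtain ⟨hc2, hu2', hu22⟩ := memN_fwd hαc hαu hαs _ _ hnrN
      by_cases hca : cn * a = 0
      · have hau : a * un ≠ 0 := fun h0 => hnr0 (by ext <;> simp [hca, h0])
        refine ⟨un, hu, ?_, ?_⟩
        · rw [ZC.comm hu a]; exact hau
        · rw [ZC.comm hu a]; exact hu2'
      · exact ⟨cn, hc, hca, hc2⟩
    · -- the ideal I is essential in C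
      intro b hbC hb0
      obtain ⟨n, hnN, hnr0, hnrN⟩ := hN ⟨0, b⟩ (fun h0 => hb0 (congrArg CD.im h0))
      obtain ⟨cn, un⟩ := n
      obtain ⟨hc, hu, hu2⟩ := memN_fwd hαc hαu hαs _ _ hnN
      have hprod : (⟨cn, un⟩ : CD A α) * ⟨0, b⟩ = ⟨α * (b * star un), star cn * b⟩ := by
        ext <;> simp
      rw [hprod] at hnr0 hnrN
      obtain ⟨h1C, h2C, h2k⟩ := memN_fwd hαc hαu hαs _ _ hnrN
      by_cases hcb : star cn * b = 0
      · have hbu : α * (b * star un) ≠ 0 := fun h0 => hnr0 (by ext <;> simp [hcb, h0])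
        have hbu2 : b * star un ≠ 0 := fun h0 => hbu (by rw [h0, mul_zero])
        refine ⟨star un, ZC.star_mem hu, ?_, ?_, ?_⟩
        · rw [ZC.comm (ZC.star_mem hu) b]; exact hbu2
        · exact ZC.mul_mem (ZC.star_mem hu) hbC
        · intro s t
          rw [ZC.comm (ZC.star_mem hu) b, ZC.nl hbC, ZC.star_kill hu hu2, mul_zero]
      · exact ⟨star cn, ZC.star_mem hc, hcb, h2C, h2k⟩
  · rintro ⟨hCE, hEI⟩
    rintro ⟨a, b⟩ hr
    by_cases hb : b = 0
    · subst hb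
      have ha : a ≠ 0 := fun h0 => hr (by ext <;> simp [h0])
      obtain ⟨z, hzC, hza, hzaC⟩ := hCE a ha
      refine ⟨⟨z, 0⟩, memN_bwd hαc hαs z 0 hzC ZC.zero_mem (by simp), ?_, ?_⟩
      · have hprod : (⟨z, 0⟩ : CD A α) * ⟨a, 0⟩ = ⟨z * a, 0⟩ := by ext <;> simp
        rw [hprod]
        exact fun h0 => hza (congrArg CD.re h0)
      · have hprod : (⟨z, 0⟩ : CD A α) * ⟨a, 0⟩ = ⟨z * a, 0⟩ := by ext <;> simp
        rw [hprod]
        exact memN_bwd hαc hαs _ _ hzaC ZC.zero_mem (by simp)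
    · obtain ⟨z, hzC, hzb, hzbC⟩ := hCE b hb
      obtain ⟨d, hdC, hdzb, hdzbI⟩ := hEI (z * b) hzbC hzb
      have heC : star z * star d ∈ ringCenter A := ZC.mul_mem (ZC.star_mem hzC) (ZC.star_mem hdC)
      have heb : (d * z) * b = d * (z * b) := ZC.nl hdC z b
      by_cases hea : (star z * star d) * a = 0
      · refine ⟨⟨star z * star d, 0⟩, memN_bwd hαc hαs _ 0 heC ZC.zero_mem (by simp), ?_, ?_⟩
        · have hprod : (⟨star z * star d, 0⟩ : CD A α) * ⟨a, b⟩ = ⟨0, d * (z * b)⟩ := by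
            ext <;> simp [hea, heb]
          rw [hprod]
          exact fun h0 => hdzb (congrArg CD.im h0)
        · have hprod : (⟨star z * star d, 0⟩ : CD A α) * ⟨a, b⟩ = ⟨0, d * (z * b)⟩ := by
            ext <;> simp [hea, heb]
          rw [hprod]
          exact memN_bwd hαc hαs _ _ ZC.zero_mem hdzbI.1 hdzbI.2
      · obtain ⟨z₁, hz₁C, hz₁ea, hz₁eaC⟩ := hCE ((star z * star d) * a) hea
        have hcC : z₁ * (star z * star d) ∈ ringCenter A := ZC.mul_mem hz₁C heC
        have hprod : (⟨z₁ * (star z * star d), 0⟩ : CD A α) * ⟨a, b⟩ =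
            ⟨z₁ * (star z * star d * a), star z₁ * (d * (z * b))⟩ := by
          have him : ((d * z) * star z₁) * b = star z₁ * (d * (z * b)) := by
            rw [ZC.p6 (ZC.star_mem hz₁C), ZC.nl (ZC.star_mem hz₁C), ZC.nl hdC]
          ext <;> simp [ZC.nl hz₁C, him]
        refine ⟨⟨z₁ * (star z * star d), 0⟩,
          memN_bwd hαc hαs _ 0 hcC ZC.zero_mem (by simp), ?_, ?_⟩
        · rw [hprod]
          exact fun h0 => hz₁ea (congrArg CD.re h0)
        · rw [hprod]
          exact memN_bwd hαc hαs _ _ hz₁eaC (ZC.mul_mem (ZC.star_mem hz₁C) hdzbI.1)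
            (fun s t => ZC.cmul_kill (ZC.star_mem hz₁C) hdzbI.2 s t)
end

section
/- Let A be a unital, not necessarily associative ring with involution *, let α be an invertible element of Z(A) with α* = α, let C = Z(A) and I = {c ∈ C : c[a,b] = 0 for all a,b ∈ A}, and let R = (A,α) be the Cayley–Dickson ring. Then R is right N-essential if and only if A is centrally essential and I is an essential ideal of the commutative associative ring C. -/
set_option linter.unusedSectionVars false

section ALemmas
variable {A : Type*} [NonAssocRing A]

namespace RC

theorem K {z : A} (hz : z ∈ ringCenter A) : ∀ a : A, z * a = a * z := fun a =>
  sub_eq_zero.mp (hz.2 a)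

theorem N1 {z : A} (hz : z ∈ ringCenter A) : ∀ a b : A, z * a * b = z * (a * b) := fun a b =>
  sub_eq_zero.mp (hz.1 a b).1

theorem N2 {z : A} (hz : z ∈ ringCenter A) : ∀ a b : A, a * z * b = a * (z * b) := fun a b =>
  sub_eq_zero.mp (hz.1 a b).2.1

theorem N3 {z : A} (hz : z ∈ ringCenter A) : ∀ a b : A, a * b * z = a * (b * z) := fun a b =>
  sub_eq_zero.mp (hz.1 a b).2.2

theorem P2 {z : A} (hz : z ∈ ringCenter A) : ∀ a b : A, (a * z) * b = z * (a * b) := fun a b => by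
  rw [← K hz a, N1 hz]

theorem P3 {z : A} (hz : z ∈ ringCenter A) : ∀ a b : A, a * (z * b) = z * (a * b) := fun a b => by
  rw [← N2 hz, ← K hz a, N1 hz]

theorem P4 {z : A} (hz : z ∈ ringCenter A) : ∀ a b : A, a * (b * z) = z * (a * b) := fun a b => by
  rw [← K hz b, P3 hz]

theorem P5 {z : A} (hz : z ∈ ringCenter A) : ∀ a b : A, (a * b) * z = z * (a * b) := fun a b =>
  (K hz (a * b)).symm

theorem mk_mem {z : A} (hK : ∀ a : A, z * a = a * z) (h1 : ∀ a b : A, z * a * b = z * (a * b))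
    (h2 : ∀ a b : A, a * z * b = a * (z * b)) (h3 : ∀ a b : A, a * b * z = a * (b * z)) :
    z ∈ ringCenter A :=
  ⟨fun a b => ⟨sub_eq_zero.mpr (h1 a b), sub_eq_zero.mpr (h2 a b), sub_eq_zero.mpr (h3 a b)⟩,
    fun a => sub_eq_zero.mpr (hK a)⟩

theorem zero_mem : (0 : A) ∈ ringCenter A :=
  mk_mem (by simp) (by simp) (by simp) (by simp)

theorem mul_mem {z w : A} (hz : z ∈ ringCenter A) (hw : w ∈ ringCenter A) :
    z * w ∈ ringCenter A := by
  refine mk_mem (fun a => ?_) (fun a b => ?_) (fun a b => ?_) (fun a b => ?_)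
  · rw [N1 hz w a, K hw a, ← N1 hz a w, K hz a, N2 hz a w]
  · rw [N1 hz w a, N1 hz (w*a) b, N1 hw a b, ← N1 hz w (a*b)]
  · rw [← N2 hz a w, N2 hw (a*z) b, N2 hz a (w*b), ← N1 hz w b]
  · rw [← N3 hw (a*b) z, N3 hz a b, N3 hw a (b*z), N3 hw b z]

theorem mul_mem_star {A : Type*} [NonAssocRing A] [StarRing A] {z : A}
    (hz : z ∈ ringCenter A) : star z ∈ ringCenter A := by
  have inj : Function.Injective (star : A → A) := star_injective
  refine mk_mem (fun a => ?_) (fun a b => ?_) (fun a b => ?_) (fun a b => ?_) <;> apply inj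
  · rw [star_mul, star_mul, star_star, K hz]
  · rw [star_mul, star_mul, star_mul, star_mul, star_star, N3 hz]
  · rw [star_mul, star_mul, star_mul, star_mul, star_star, N2 hz]
  · rw [star_mul, star_mul, star_mul, star_mul, star_star, N1 hz]
theorem killr {d : A} (hd : d ∈ ringCenter A) (hdI : ∀ a b : A, d * naCommutator a b = 0)
    (a b : A) : naCommutator a b * d = 0 := by
  rw [← K hd]; exact hdI a b

theorem swapr {d : A} (hd : d ∈ ringCenter A) (hdI : ∀ a b : A, d * naCommutator a b = 0)
    (a b : A) : (a * b) * d = (b * a) * d := by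
  have h := killr hd hdI a b
  rw [naCommutator, sub_mul, sub_eq_zero] at h
  exact h

theorem star_kills {A : Type*} [NonAssocRing A] [StarRing A] {d : A}
    (hd : d ∈ ringCenter A) (hdI : ∀ a b : A, d * naCommutator a b = 0) (a b : A) :
    star d * naCommutator a b = 0 := by
  apply star_injective
  rw [star_zero, star_mul, star_star]
  have : star (naCommutator a b) = naCommutator (star b) (star a) := by
    simp [naCommutator, star_sub, star_mul]
  rw [this, killr hd hdI]

theorem mul_kills {z d : A} (hz : z ∈ ringCenter A) (hd : d ∈ ringCenter A)
    (hdI : ∀ a b : A, d * naCommutator a b = 0) (a b : A) :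
    (z * d) * naCommutator a b = 0 := by
  rw [N1 hz, hdI a b, mul_zero]

theorem kills_mul_central {e z : A} (he : e ∈ ringCenter A) (hz : z ∈ ringCenter A)
    (hek : ∀ x y : A, e * naCommutator x y = 0) (x y : A) :
    (e * z) * naCommutator x y = 0 := by
  rw [N1 he, K hz, ← N1 he, hek, zero_mul]

theorem central_mul_kills {z w : A} (hz : z ∈ ringCenter A)
    (hwk : ∀ x y : A, w * naCommutator x y = 0) (x y : A) :
    (z * w) * naCommutator x y = 0 := by
  rw [N1 hz, hwk, mul_zero]

theorem cancel {α : A} (hαc : α ∈ ringCenter A) (hαu : ∃ β : A, α * β = 1 ∧ β * α = 1)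
    {x y : A} (h : α * x = α * y) : x = y := by
  obtain ⟨β, hβ1, hβ2⟩ := hαu
  calc x = (β * α) * x := by rw [hβ2, one_mul]
  _ = β * (α * x) := N2 hαc β x
  _ = β * (α * y) := by rw [h]
  _ = (β * α) * y := (N2 hαc β y).symm
  _ = y := by rw [hβ2, one_mul]

end RC

theorem naAssociator_add₁_s2 {x y a b : A} :
    naAssociator (x + y) a b = naAssociator x a b + naAssociator y a b := by
  simp only [naAssociator, add_mul]; abel

theorem naAssociator_add₂_s2 {x y a b : A} :
    naAssociator a (x + y) b = naAssociator a x b + naAssociator a y b := by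
  simp only [naAssociator, add_mul, mul_add]; abel

theorem naAssociator_add₃_s2 {x y a b : A} :
    naAssociator a b (x + y) = naAssociator a b x + naAssociator a b y := by
  simp only [naAssociator, mul_add]; abel

theorem assocCenter_add_mem {x y : A} (hx : x ∈ assocCenter A) (hy : y ∈ assocCenter A) :
    x + y ∈ assocCenter A := fun a b => by
  rcases hx a b with ⟨h1, h2, h3⟩
  rcases hy a b with ⟨h4, h5, h6⟩
  exact ⟨by rw [naAssociator_add₁_s2, h1, h4, add_zero],
    by rw [naAssociator_add₂_s2, h2, h5, add_zero],
    by rw [naAssociator_add₃_s2, h3, h6, add_zero]⟩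

end ALemmas

namespace CD
variable {A : Type*} [NonAssocRing A] [StarRing A] {α : A}

@[simp] theorem sub_re (z w : CD A α) : (z - w).re = z.re - w.re := by
  rw [sub_eq_add_neg, add_re, neg_re, ← sub_eq_add_neg]

@[simp] theorem sub_im (z w : CD A α) : (z - w).im = z.im - w.im := by
  rw [sub_eq_add_neg, add_im, neg_im, ← sub_eq_add_neg]

theorem mk_mem_assocCenter_left (hαc : α ∈ ringCenter A) (hαs : star α = α)
    {c : A} (hc : c ∈ ringCenter A) :
    (⟨c, 0⟩ : CD A α) ∈ assocCenter (CD A α) := by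
  have hsc : star c ∈ ringCenter A := RC.mul_mem_star hc
  intro z w
  obtain ⟨a, b⟩ := z
  obtain ⟨a', b'⟩ := w
  refine ⟨?_, ?_, ?_⟩ <;> (unfold naAssociator; rw [sub_eq_zero]) <;> ext <;>
    simp only [mul_re, mul_im, mk_re, mk_im, star_zero, star_mul, star_star, mul_zero, zero_mul,
      add_zero, zero_add, mul_add, add_mul]
  · rw [RC.N1 hc a a', RC.P4 hc b' (star b), RC.P3 hαc c (b' * star b)]
  · rw [RC.P2 hsc (star a) b', RC.P3 hsc a' b]
  · rw [RC.N2 hc a a', RC.P4 hsc b' (star b), RC.N1 hsc b' (star b)]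
  · rw [RC.N1 hsc (star a) b', RC.P3 hsc (star a) b', RC.P3 hc a' b, RC.N1 hc a' b]
  · rw [RC.N3 hc a a', RC.P5 hc α (b' * star b), RC.P3 hαc c (b' * star b), RC.N1 hc b' (star b)]
  · rw [RC.P3 hc (star a) b', RC.P2 hc a' b]

theorem mk_mem_assocCenter_right (hαc : α ∈ ringCenter A) (hαs : star α = α)
    {d : A} (hd : d ∈ ringCenter A) (hdI : ∀ a b : A, d * naCommutator a b = 0) :
    (⟨0, d⟩ : CD A α) ∈ assocCenter (CD A α) := by
  have hsd : star d ∈ ringCenter A := RC.mul_mem_star hd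
  have hsdI : ∀ a b : A, star d * naCommutator a b = 0 := RC.star_kills hd hdI
  have hsw : ∀ x y : A, d * (x * y) = d * (y * x) := fun x y => by
    have h := hdI x y; rw [naCommutator, mul_sub, sub_eq_zero] at h; exact h
  have hssw : ∀ x y : A, star d * (x * y) = star d * (y * x) := fun x y => by
    have h := hsdI x y; rw [naCommutator, mul_sub, sub_eq_zero] at h; exact h
  intro z w
  obtain ⟨a, b⟩ := z
  obtain ⟨a', b'⟩ := w
  refine ⟨?_, ?_, ?_⟩ <;> (unfold naAssociator; rw [sub_eq_zero]) <;> ext <;>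
    simp only [mul_re, mul_im, mk_re, mk_im, star_zero, star_mul, star_star, mul_zero, zero_mul,
      add_zero, zero_add, star_add, mul_add, add_mul, hαs]
  · rw [RC.N1 hαc (b * star d) a', RC.P2 hsd b a', RC.P3 hsd b' (star a), RC.P5 hsd (star a) b', RC.P5 hsd a' b,
      hssw b a', hssw b' (star a)]
    exact add_comm _ _
  · rw [RC.P5 hαc d (star b), RC.N1 hαc (d * star b) b', RC.N1 hd (star b) b',
      RC.P4 hd a' a, RC.P5 hd a a', RC.P5 hd α (b' * star b), RC.P3 hαc d (b' * star b),
      hsw (star b) b', hsw a' a]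
    exact add_comm _ _
  · rw [RC.N1 hαc (d * star b) a', RC.N1 hd (star b) a', RC.P3 hsd b' a, RC.P3 hαc a (b' * star d), RC.P4 hsd a b',
      RC.P2 hd a' (star b), hsw (star b) a', hssw b' a]
    exact add_comm _ _
  · rw [RC.P5 hαc b (star d), RC.N1 hαc (b * star d) b', RC.P2 hsd b b',
      RC.P4 hd a' (star a), RC.P4 hd (star a) a', RC.N1 hαc (b' * star d) b, RC.P2 hsd b' b,
      hssw b b', hsw a' (star a)]
    exact add_comm _ _
  · rw [RC.P3 hαc a (d * star b'), RC.P3 hd a (star b'), RC.P2 hd (star a') (star b),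
      hsw (star b') a, hsw (star b) (star a')]
  · rw [RC.P5 hd (star a') (star a), RC.P5 hαc b (star b'), RC.P5 hd α (b * star b'),
      RC.P3 hαc d (b * star b'), RC.P4 hd (star a) (star a'), RC.N1 hαc (d * star b') b,
      RC.N1 hd (star b') b, hsw (star a') (star a), hsw (b) (star b')]

theorem mem_assocCenter_iff (hαc : α ∈ ringCenter A)
    (hαu : ∃ β : A, α * β = 1 ∧ β * α = 1) (hαs : star α = α) {n : CD A α} :
    n ∈ assocCenter (CD A α) ↔
      n.re ∈ ringCenter A ∧ n.im ∈ ringCenter A ∧ ∀ a b : A, n.im * naCommutator a b = 0 := by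
  constructor
  · intro h
    set c := n.re with hc
    set d := n.im with hd
    have base : ∀ z w : CD A α, (n * z) * w = n * (z * w) ∧ (z * n) * w = z * (n * w) ∧
        (z * w) * n = z * (w * n) := fun z w => by
      obtain ⟨h1, h2, h3⟩ := h z w
      exact ⟨sub_eq_zero.mp h1, sub_eq_zero.mp h2, sub_eq_zero.mp h3⟩
    have L1 : ∀ a b : A, c * a * b = c * (a * b) := fun a b => by
      have e := congrArg CD.re (base ⟨a, 0⟩ ⟨b, 0⟩).1
      simp only [mul_re, mul_im, mk_re, mk_im, star_zero, mul_zero, zero_mul, add_zero,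
        zero_add] at e
      exact e
    have L2 : ∀ a b : A, b * (a * d) = (a * b) * d := fun a b => by
      have e := congrArg CD.im (base ⟨a, 0⟩ ⟨b, 0⟩).1
      simp only [mul_re, mul_im, mk_re, mk_im, star_zero, mul_zero, zero_mul, add_zero,
        zero_add] at e
      exact e
    have M1 : ∀ a b : A, a * c * b = a * (c * b) := fun a b => by
      have e := congrArg CD.re (base ⟨a, 0⟩ ⟨b, 0⟩).2.1
      simp only [mul_re, mul_im, mk_re, mk_im, star_zero, mul_zero, zero_mul, add_zero,
        zero_add] at e
      exact e
    have M2 : ∀ a b : A, b * (star a * d) = star a * (b * d) := fun a b => by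
      have e := congrArg CD.im (base ⟨a, 0⟩ ⟨b, 0⟩).2.1
      simp only [mul_re, mul_im, mk_re, mk_im, star_zero, mul_zero, zero_mul, add_zero,
        zero_add] at e
      exact e
    have R1 : ∀ a b : A, a * b * c = a * (b * c) := fun a b => by
      have e := congrArg CD.re (base ⟨a, 0⟩ ⟨b, 0⟩).2.2
      simp only [mul_re, mul_im, mk_re, mk_im, star_zero, mul_zero, zero_mul, add_zero,
        zero_add, star_mul] at e
      exact e
    have E4 : ∀ b b' : A, α * (b' * (star b * c)) = c * (α * (b' * star b)) := fun b b' => by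
      have e := congrArg CD.re (base ⟨0, b⟩ ⟨0, b'⟩).1
      simp only [mul_re, mul_im, mk_re, mk_im, star_zero, mul_zero, zero_mul, add_zero,
        zero_add, star_mul, star_star, star_one, hαs] at e
      exact e
    have E5 : ∀ b b' : A, (d * star b) * α * b' = α * (b' * star b) * d := fun b b' => by
      have e := congrArg CD.im (base ⟨0, b⟩ ⟨0, b'⟩).1
      simp only [mul_re, mul_im, mk_re, mk_im, star_zero, mul_zero, zero_mul, add_zero,
        zero_add, star_mul, star_star, star_one, hαs] at e
      exact e
    have cK : ∀ x : A, c * x = x * c := fun x => by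
      have e := E4 1 x
      rw [star_one, one_mul, mul_one] at e
      rw [RC.K hαc x, RC.P4 hαc c x] at e
      exact (RC.cancel hαc hαu e).symm
    have dK : ∀ x : A, d * x = x * d := fun x => by
      have e := E5 1 x
      rw [star_one] at e
      simp only [mul_one] at e
      rw [RC.P2 hαc d x, RC.N1 hαc x d] at e
      exact RC.cancel hαc hαu e
    have E5' : ∀ u v : A, (d * u) * v = (v * u) * d := fun u v => by
      have e := E5 (star u) v
      rw [star_star] at e
      rw [RC.P5 hαc d u, RC.N1 hαc (d * u) v, RC.N1 hαc (v * u) d] at e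
      exact RC.cancel hαc hαu e
    have m2 : ∀ u v : A, v * (u * d) = u * (v * d) := fun u v => by
      have e := M2 (star u) v; rwa [star_star] at e
    have dkill : ∀ a b : A, d * naCommutator a b = 0 := fun a b => by
      rw [naCommutator, mul_sub, sub_eq_zero, dK (a * b), dK (b * a), ← L2 a b, ← L2 b a]
      exact m2 a b
    have dsw : ∀ x y : A, (x * y) * d = (y * x) * d := fun x y => by
      have h' := dkill x y
      rw [naCommutator, mul_sub, sub_eq_zero] at h'
      rw [← dK (x * y), ← dK (y * x), h']
    have dN1 : ∀ x y : A, d * x * y = d * (x * y) := fun x y => by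
      rw [E5' x y, dK (x * y)]
      exact dsw y x
    have dN2 : ∀ x y : A, x * d * y = x * (d * y) := fun x y => by
      rw [← dK x, E5' x y, dK y, L2 y x]
    have dN3 : ∀ x y : A, x * y * d = x * (y * d) := fun x y => by
      rw [L2 y x]
      exact dsw x y
    exact ⟨RC.mk_mem cK L1 M1 R1, RC.mk_mem dK dN1 dN2 dN3, dkill⟩
  · rintro ⟨h1, h2, h3⟩
    have hn : n = (⟨n.re, 0⟩ : CD A α) + ⟨0, n.im⟩ := by ext <;> simp
    rw [hn]
    exact assocCenter_add_mem (mk_mem_assocCenter_left hαc hαs h1)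
      (mk_mem_assocCenter_right hαc hαs h2 h3)

end CD

theorem stmt2 {A : Type*} [NonAssocRing A] [StarRing A] {α : A}
    (hαc : α ∈ ringCenter A) (hαu : ∃ β : A, α * β = 1 ∧ β * α = 1) (hαs : star α = α) :
    IsRightNEssential (CD A α) ↔
      IsCentrallyEssential A ∧
        EssentialIn {c : A | c ∈ ringCenter A ∧ ∀ a b : A, c * naCommutator a b = 0}
          (ringCenter A) := by
  have char := fun {n : CD A α} => CD.mem_assocCenter_iff hαc hαu hαs (n := n)
  constructor
  · intro H
    constructor
    · intro r hr
      have hr' : (⟨r, 0⟩ : CD A α) ≠ 0 := fun h => hr (congrArg CD.re h)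
      obtain ⟨m, hmN, hne, hmem⟩ := H ⟨r, 0⟩ hr'
      rw [char] at hmN hmem
      obtain ⟨hcm, hdm, hdI⟩ := hmN
      obtain ⟨p1, p2, p3⟩ := hmem
      have hre : ((⟨r, 0⟩ : CD A α) * m).re = r * m.re := by simp
      have him : ((⟨r, 0⟩ : CD A α) * m).im = star r * m.im := by simp
      rw [hre] at p1
      rw [him] at p2
      by_cases h0 : r * m.re = 0
      · have him0 : star r * m.im ≠ 0 := by
          intro hz
          apply hne
          ext
          · rw [hre, h0]; rfl
          · rw [him, hz]; rfl
        have key : star m.im * r = star (star r * m.im) := by rw [star_mul, star_star]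
        refine ⟨star m.im, RC.mul_mem_star hdm, ?_, ?_⟩
        · rw [key]
          exact fun hh => him0 (star_eq_zero.mp hh)
        · rw [key]
          exact RC.mul_mem_star p2
      · refine ⟨m.re, hcm, ?_, ?_⟩
        · rw [RC.K hcm r]; exact h0
        · rw [RC.K hcm r]; exact p1
    · intro b hb hb0
      have hr' : (⟨0, b⟩ : CD A α) ≠ 0 := fun h => hb0 (congrArg CD.im h)
      obtain ⟨m, hmN, hne, hmem⟩ := H ⟨0, b⟩ hr'
      rw [char] at hmN hmem
      obtain ⟨hcm, hdm, hdI⟩ := hmN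
      obtain ⟨p1, p2, p3⟩ := hmem
      have hre : ((⟨0, b⟩ : CD A α) * m).re = α * (m.im * star b) := by simp
      have him : ((⟨0, b⟩ : CD A α) * m).im = m.re * b := by simp
      rw [him] at p2 p3
      by_cases h0 : m.re * b = 0
      · have hne' : α * (m.im * star b) ≠ 0 := by
          intro hz
          apply hne
          ext
          · rw [hre, hz]; rfl
          · rw [him, h0]; rfl
        have h1 : m.im * star b ≠ 0 := fun hz => hne' (by rw [hz, mul_zero])
        have hsb : star b ∈ ringCenter A := RC.mul_mem_star hb
        have key : star m.im * b = star (m.im * star b) := by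
          rw [star_mul, star_star]
          exact RC.K (RC.mul_mem_star hdm) b
        refine ⟨star m.im, RC.mul_mem_star hdm, ?_, ?_, ?_⟩
        · rw [key]
          exact fun hh => h1 (star_eq_zero.mp hh)
        · rw [key]
          exact RC.mul_mem_star (RC.mul_mem hdm hsb)
        · exact RC.kills_mul_central (RC.mul_mem_star hdm) hb (RC.star_kills hdm hdI)
      · exact ⟨m.re, hcm, h0, p2, p3⟩
  · rintro ⟨hCE, hESS⟩ r hr
    by_cases h2 : r.im = 0
    · have h1 : r.re ≠ 0 := by
        intro h
        apply hr
        ext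
        · exact h
        · exact h2
      obtain ⟨z, hz, hz1, hz2⟩ := hCE r.re h1
      refine ⟨⟨z, 0⟩, char.mpr ⟨hz, RC.zero_mem, by simp⟩, ?_, ?_⟩
      · intro hcontr
        apply hz1
        have e := congrArg CD.re hcontr
        simp only [CD.mul_re, CD.mk_re, CD.mk_im, CD.zero_re, star_zero, mul_zero, zero_mul,
          add_zero] at e
        rw [RC.K hz r.re]
        exact e
      · have e1 : (r * (⟨z, 0⟩ : CD A α)).re = z * r.re := by
          simp only [CD.mul_re, CD.mk_re, CD.mk_im, star_zero, mul_zero, zero_mul, add_zero]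
          rw [RC.K hz r.re]
        have e2 : (r * (⟨z, 0⟩ : CD A α)).im = 0 := by
          simp only [CD.mul_im, CD.mk_re, CD.mk_im, mul_zero, zero_add, h2]
        refine char.mpr ⟨?_, ?_, fun a b => by rw [e2, zero_mul]⟩
        · rw [e1]; exact hz2
        · rw [e2]; exact RC.zero_mem
    · obtain ⟨z, hz, hz1, hz2⟩ := hCE r.im h2
      obtain ⟨e, he, he1, he2⟩ := hESS (z * r.im) hz2 hz1
      have hc0m : e * z ∈ ringCenter A := RC.mul_mem he hz
      have hc0r : (e * z) * r.im = e * (z * r.im) := RC.N1 he z r.im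
      by_cases hs : r.re * (e * z) = 0
      · refine ⟨⟨e * z, 0⟩, char.mpr ⟨hc0m, RC.zero_mem, by simp⟩, ?_, ?_⟩
        · intro hcontr
          apply he1
          have h' := congrArg CD.im hcontr
          simp only [CD.mul_im, CD.mk_re, CD.mk_im, CD.zero_im, mul_zero, zero_add] at h'
          rw [← hc0r]
          exact h'
        · have e1 : (r * (⟨e * z, 0⟩ : CD A α)).re = 0 := by
            simp only [CD.mul_re, CD.mk_re, CD.mk_im, zero_mul, mul_zero, add_zero]
            exact hs
          have e2 : (r * (⟨e * z, 0⟩ : CD A α)).im = e * (z * r.im) := by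
            simp only [CD.mul_im, CD.mk_re, CD.mk_im, mul_zero, zero_add]
            exact hc0r
          refine char.mpr ⟨?_, ?_, fun a b => by rw [e2]; exact he2.2 a b⟩
          · rw [e1]; exact RC.zero_mem
          · rw [e2]; exact he2.1
      · obtain ⟨z', hz', hz'1, hz'2⟩ := hCE (r.re * (e * z)) hs
        have e1 : (r * (⟨(e * z) * z', 0⟩ : CD A α)).re = z' * (r.re * (e * z)) := by
          simp only [CD.mul_re, CD.mk_re, CD.mk_im, zero_mul, mul_zero, add_zero]
          rw [← RC.N3 hz' r.re (e * z), RC.P5 hz' r.re (e * z)]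
        have e2 : (r * (⟨(e * z) * z', 0⟩ : CD A α)).im = z' * (e * (z * r.im)) := by
          simp only [CD.mul_im, CD.mk_re, CD.mk_im, mul_zero, zero_add]
          rw [RC.P2 hz' (e * z) r.im, hc0r]
        refine ⟨⟨(e * z) * z', 0⟩, char.mpr ⟨RC.mul_mem hc0m hz', RC.zero_mem, by simp⟩, ?_, ?_⟩
        · intro hcontr
          apply hz'1
          have h' := congrArg CD.re hcontr
          rw [e1, CD.zero_re] at h'
          exact h'
        · refine char.mpr ⟨?_, ?_, fun a b => by rw [e2]; exact RC.central_mul_kills hz' he2.2 a b⟩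
          · rw [e1]; exact hz'2
          · rw [e2]; exact RC.mul_mem hz' he2.1
end

section
/- Let A be a unital, not necessarily associative ring with involution *, let α be an invertible element of Z(A) with α* = α, and let R = (A,α) be the Cayley–Dickson ring. Set C = Z(A), I = {c ∈ C : c[a,b] = 0 for all a,b ∈ A}, B = {c ∈ C : c* = c}, and J = {b ∈ B : b(a − a*) = 0 for all a ∈ A}. Then the center of R is Z(R) = {(x,y) : x ∈ B, y ∈ I ∩ J}. -/
set_option linter.unusedSectionVars false

section Toolkit

variable {A : Type*} [NonAssocRing A]

theorem center_comm {c : A} (h : c ∈ ringCenter A) (a : A) : c * a = a * c :=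
  sub_eq_zero.mp (h.2 a)

theorem center_a1 {c : A} (h : c ∈ ringCenter A) (a b : A) : c * a * b = c * (a * b) :=
  sub_eq_zero.mp (h.1 a b).1

theorem center_a2 {c : A} (h : c ∈ ringCenter A) (a b : A) : a * c * b = a * (c * b) :=
  sub_eq_zero.mp (h.1 a b).2.1

theorem center_a3 {c : A} (h : c ∈ ringCenter A) (a b : A) : a * b * c = a * (b * c) :=
  sub_eq_zero.mp (h.1 a b).2.2

/-- pull a central element to the outer-left: `a * c = c * a`. -/
theorem cpull1 {c : A} (h : c ∈ ringCenter A) (a : A) : a * c = c * a :=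
  (center_comm h a).symm

theorem cpull2 {c : A} (h : c ∈ ringCenter A) (a b : A) : a * c * b = c * (a * b) := by
  rw [cpull1 h a, center_a1 h]

theorem cpull3 {c : A} (h : c ∈ ringCenter A) (a b : A) : a * (c * b) = c * (a * b) := by
  rw [← center_a2 h, cpull2 h]

theorem cpull4 {c : A} (h : c ∈ ringCenter A) (a b : A) : a * (b * c) = c * (a * b) := by
  rw [← center_a3 h, cpull1 h]

theorem cpull5 {c : A} (h : c ∈ ringCenter A) (a b : A) : c * a * b = c * (a * b) :=
  center_a1 h a b

theorem sub_eq_zero_add {X1 X2 Y1 Y2 : A} (h1 : X1 - Y1 = 0) (h2 : X2 - Y2 = 0) :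
    (X1 + X2) - (Y1 + Y2) = 0 := by
  rw [sub_eq_zero] at *; rw [h1, h2]

theorem addMem_assocCenter {u v : A} (hu : u ∈ assocCenter A) (hv : v ∈ assocCenter A) :
    u + v ∈ assocCenter A := by
  intro a b
  obtain ⟨h1, h2, h3⟩ := hu a b
  obtain ⟨k1, k2, k3⟩ := hv a b
  refine ⟨?_, ?_, ?_⟩ <;> simp only [naAssociator, add_mul, mul_add] at *
  · exact sub_eq_zero_add h1 k1
  · exact sub_eq_zero_add h2 k2
  · exact sub_eq_zero_add h3 k3

theorem addMem_ringCenter {u v : A} (hu : u ∈ ringCenter A) (hv : v ∈ ringCenter A) :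
    u + v ∈ ringCenter A := by
  refine ⟨addMem_assocCenter hu.1 hv.1, fun a => ?_⟩
  have h1 := hu.2 a; have h2 := hv.2 a
  simp only [naCommutator, add_mul, mul_add] at *
  exact sub_eq_zero_add h1 h2

end Toolkit

section Pieces
variable {A : Type*} [NonAssocRing A] [StarRing A] {α : A}

theorem re_piece (hαc : α ∈ ringCenter A) {x : A} (hx : x ∈ ringCenter A) (hsx : star x = x) :
    (⟨x, 0⟩ : CD A α) ∈ ringCenter (CD A α) := by
  constructor
  · rintro ⟨a, b⟩ ⟨c, d⟩
    refine ⟨?_, ?_, ?_⟩ <;> rw [naAssociator, sub_eq_zero] <;> ext <;>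
      simp only [CD.mul_re, CD.mul_im, CD.mk_re, CD.mk_im, star_zero, star_mul, star_star,
        star_add, hsx, mul_zero, zero_mul, add_zero, zero_add, mul_add, add_mul] <;>
      simp only [cpull1 hx, cpull2 hx, cpull3 hx, cpull4 hx, cpull5 hx] <;>
      simp only [cpull1 hαc, cpull2 hαc, cpull3 hαc, cpull4 hαc, cpull5 hαc] <;>
      abel
  · rintro ⟨a, b⟩
    rw [naCommutator, sub_eq_zero]
    ext <;> simp [hsx, center_comm hx]
end Pieces

section Pieces2
variable {A : Type*} [NonAssocRing A] [StarRing A] {α : A}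

theorem y_star_kill {y : A} (hy : y ∈ ringCenter A) (hky : ∀ a b : A, y * (a * b) = y * (b * a))
    (hty : ∀ a : A, y * star a = y * a) :
    (∀ s t : A, y * (star s * t) = y * (s * t)) ∧ (∀ s t : A, y * (s * star t) = y * (s * t)) := by
  constructor
  · intro s t
    rw [← center_a1 hy, hty, center_a1 hy]
  · intro s t
    rw [hky, ← center_a1 hy, hty, center_a1 hy, hky]

theorem im_piece (hαc : α ∈ ringCenter A) (hαs : star α = α) {y : A} (hy : y ∈ ringCenter A)
    (hsy : star y = y)
    (hky : ∀ a b : A, y * (a * b) = y * (b * a)) (hty : ∀ a : A, y * star a = y * a) :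
    (⟨0, y⟩ : CD A α) ∈ ringCenter (CD A α) := by
  obtain ⟨yst, yts⟩ := y_star_kill hy hky hty
  constructor
  · rintro ⟨a, b⟩ ⟨c, d⟩
    refine ⟨?_, ?_, ?_⟩ <;> rw [naAssociator, sub_eq_zero] <;> ext <;>
      simp only [CD.mul_re, CD.mul_im, CD.mk_re, CD.mk_im, star_zero, star_mul, star_star,
        star_add, star_neg, hsy, hαs, mul_zero, zero_mul, add_zero, zero_add, mul_add,
        add_mul] <;>
      (try simp only [cpull1 hy, cpull2 hy, cpull3 hy, cpull4 hy, cpull5 hy]) <;>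
      (try simp only [cpull1 hαc, cpull2 hαc, cpull3 hαc, cpull4 hαc, cpull5 hαc]) <;>
      (try simp only [yst, yts, hty])
    all_goals first
      | abel1
      | (rw [hky b c, hky d a] <;> abel1)
      | (rw [hky b d, hky c a] <;> abel1)
  · rintro ⟨a, b⟩
    rw [naCommutator, sub_eq_zero]
    ext <;>
      simp only [CD.mul_re, CD.mul_im, CD.mk_re, CD.mk_im, star_zero, star_mul, star_star,
        star_add, hsy, hαs, mul_zero, zero_mul, add_zero, zero_add] <;>
      (try simp only [cpull1 hy, cpull2 hy, cpull3 hy, cpull4 hy, cpull5 hy]) <;>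
      (try simp only [cpull1 hαc, cpull2 hαc, cpull3 hαc, cpull4 hαc, cpull5 hαc]) <;>
      (try simp only [yst, yts, hty])
end Pieces2

theorem stmt3 {A : Type*} [NonAssocRing A] [StarRing A] {α : A}
    (hαc : α ∈ ringCenter A) (hαu : ∃ β : A, α * β = 1 ∧ β * α = 1) (hαs : star α = α) :
    ringCenter (CD A α) =
      {z : CD A α | (z.re ∈ ringCenter A ∧ star z.re = z.re) ∧
        ((z.im ∈ ringCenter A ∧ ∀ a b : A, z.im * naCommutator a b = 0) ∧
          ((z.im ∈ ringCenter A ∧ star z.im = z.im) ∧ ∀ a : A, z.im * (a - star a) = 0))} := by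
  obtain ⟨β, hβ1, hβ2⟩ := hαu
  have hβα : ∀ s : A, β * (α * s) = s := fun s => by
    rw [← center_a2 hαc, hβ2, one_mul]
  have hcan : ∀ s t : A, α * s = α * t → s = t := fun s t h => by
    rw [← hβα s, h, hβα]
  ext z
  obtain ⟨x, y⟩ := z
  simp only [Set.mem_setOf_eq, CD.mk_re, CD.mk_im]
  constructor
  · intro hz
    -- commutator extraction
    have hmul : ∀ w : CD A α, (⟨x, y⟩ : CD A α) * w = w * ⟨x, y⟩ := fun w =>
      sub_eq_zero.mp (hz.2 w)
    have Cre : ∀ a b : A, x * a + α * (b * star y) = a * x + α * (y * star b) := fun a b => by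
      have := congrArg CD.re (hmul ⟨a, b⟩); simpa using this
    have Cim : ∀ a b : A, star x * b + a * y = star a * y + x * b := fun a b => by
      have := congrArg CD.im (hmul ⟨a, b⟩); simpa using this
    have hxc : ∀ a : A, x * a = a * x := fun a => by
      have := Cre a 0; simpa using this
    have hsx : star x = x := by
      have := Cim 0 1; simpa using this
    have hay : ∀ a : A, a * y = star a * y := fun a => by
      have := Cim a 0; simpa using this
    have hbys : ∀ b : A, b * star y = y * star b := fun b => by
      have := Cre 0 b; simp at this
      exact hcan _ _ this
    have hsy : star y = y := by
      have := hbys 1; simpa using this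
    have hby : ∀ b : A, b * y = y * star b := fun b => by rw [← hbys, hsy]
    have hyc : ∀ b : A, y * b = b * y := fun b => by
      calc y * b = y * star (star b) := by rw [star_star]
        _ = star b * y := (hby (star b)).symm
        _ = b * y := (hay b).symm
    have hty : ∀ a : A, y * star a = y * a := fun a => by rw [← hby, hyc]
    -- associator extraction
    have A1 : ∀ w1 w2 : CD A α, (⟨x, y⟩ : CD A α) * w1 * w2 = ⟨x, y⟩ * (w1 * w2) :=
      fun w1 w2 => sub_eq_zero.mp (hz.1 w1 w2).1
    have A2 : ∀ w1 w2 : CD A α, w1 * (⟨x, y⟩ : CD A α) * w2 = w1 * (⟨x, y⟩ * w2) :=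
      fun w1 w2 => sub_eq_zero.mp (hz.1 w1 w2).2.1
    have A3 : ∀ w1 w2 : CD A α, w1 * w2 * (⟨x, y⟩ : CD A α) = w1 * (w2 * ⟨x, y⟩) :=
      fun w1 w2 => sub_eq_zero.mp (hz.1 w1 w2).2.2
    have E1re : ∀ a c : A, x * a * c = x * (a * c) := fun a c => by
      have := congrArg CD.re (A1 ⟨a, 0⟩ ⟨c, 0⟩); simpa using this
    have E1im : ∀ a c : A, c * (a * y) = a * c * y := fun a c => by
      have := congrArg CD.im (A1 ⟨a, 0⟩ ⟨c, 0⟩); simpa using this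
    have E2re : ∀ a c : A, a * x * c = a * (x * c) := fun a c => by
      have := congrArg CD.re (A2 ⟨a, 0⟩ ⟨c, 0⟩); simpa using this
    have E2im0 : ∀ a c : A, c * (star a * y) = star a * (c * y) := fun a c => by
      have := congrArg CD.im (A2 ⟨a, 0⟩ ⟨c, 0⟩); simpa using this
    have E3re : ∀ a c : A, a * c * x = a * (c * x) := fun a c => by
      have := congrArg CD.re (A3 ⟨a, 0⟩ ⟨c, 0⟩); simpa using this
    have E2im : ∀ a c : A, c * (a * y) = a * (c * y) := fun a c => by
      have := E2im0 (star a) c; rwa [star_star] at this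
    have yr : ∀ a c : A, a * c * y = a * (c * y) := fun a c =>
      (E1im a c).symm.trans (E2im a c)
    have P10 : ∀ b c : A, α * (y * star b) * c = α * (c * y * star b) := fun b c => by
      have := congrArg CD.re (A2 ⟨0, b⟩ ⟨c, 0⟩); simpa using this
    have P1 : ∀ b c : A, y * b * c = c * y * b := fun b c => by
      have := P10 (star b) c
      rw [star_star, center_a1 hαc] at this
      exact hcan _ _ this
    have P20 : ∀ b c : A, α * (y * (star b * star c)) = α * (star c * y * star b) :=
      fun b c => by
        have := congrArg CD.re (A3 ⟨0, b⟩ ⟨c, 0⟩); simpa using this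
    have P2 : ∀ b c : A, y * (b * c) = c * y * b := fun b c => by
      have := P20 (star b) (star c)
      rw [star_star, star_star] at this
      exact hcan _ _ this
    have yl : ∀ b c : A, y * b * c = y * (b * c) := fun b c => by
      rw [P1, ← P2]
    have ym : ∀ a c : A, a * y * c = a * (y * c) := fun a c => by
      rw [← hyc a, yl, hyc (a * c), yr, ← hyc c]
    have hky : ∀ a b : A, y * (a * b) = y * (b * a) := fun a b => by
      rw [P2, ← hyc b, yl]
    refine ⟨⟨⟨fun a b => ⟨sub_eq_zero.mpr (E1re a b), sub_eq_zero.mpr (E2re a b),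
        sub_eq_zero.mpr (E3re a b)⟩, fun a => sub_eq_zero.mpr (hxc a)⟩, hsx⟩, ?_, ?_⟩
    · refine ⟨⟨fun a b => ⟨sub_eq_zero.mpr (yl a b), sub_eq_zero.mpr (ym a b),
        sub_eq_zero.mpr (yr a b)⟩, fun a => sub_eq_zero.mpr (hyc a)⟩, fun a b => ?_⟩
      rw [naCommutator, mul_sub, hky a b, sub_self]
    · refine ⟨⟨⟨fun a b => ⟨sub_eq_zero.mpr (yl a b), sub_eq_zero.mpr (ym a b),
        sub_eq_zero.mpr (yr a b)⟩, fun a => sub_eq_zero.mpr (hyc a)⟩, hsy⟩, fun a => ?_⟩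
      rw [mul_sub, hty, sub_self]
  · rintro ⟨⟨hx, hsx⟩, ⟨hy, hkill⟩, ⟨-, hsy⟩, hstar⟩
    have hky : ∀ a b : A, y * (a * b) = y * (b * a) := fun a b => by
      have := hkill a b
      rw [naCommutator, mul_sub, sub_eq_zero] at this
      exact this
    have hty : ∀ a : A, y * star a = y * a := fun a => by
      have := hstar a
      rw [mul_sub, sub_eq_zero] at this
      exact this.symm
    have hmem := addMem_ringCenter (re_piece hαc hx hsx) (im_piece hαc hαs hy hsy hky hty)
    have heq : ((⟨x, 0⟩ : CD A α) + ⟨0, y⟩) = ⟨x, y⟩ := by ext <;> simp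
    rwa [heq] at hmem
end

section
/- Let A be a unital, not necessarily associative ring with involution *, let α be an invertible element of Z(A) with α* = α, and let R = (A,α) be the Cayley–Dickson ring. An element (x,y) ∈ R belongs to N(R) if and only if for all u,v ∈ A the following 24 identities hold: (xu)v = x(uv), (ux)v = u(xv), (uv)x = u(vx), v(ux) = x(vu), (xu)v = u(vx), (vu)x = (xv)u, v(xu) = (vu)x, v(ux) = (vx)u, x(uv) = u(xv), (ux)v = (uv)x, v(xu) = (xv)u, x(vu) = (vx)u, and (uy)v = y(vu), (uy)v = (yv)u, y(vu) = u(yv), v(yu) = y(uv), (yu)v = (vy)u, y(uv) = (vy)u, v(uy) = (uv)y, v(uy) = u(vy), (vu)y = u(vy), (yu)v = (vu)y, v(yu) = u(yv), (uv)y = (yv)u. -/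
set_option linter.unusedSectionVars false

theorem stmt5 {A : Type*} [NonAssocRing A] [StarRing A] {α : A}
    (hαc : α ∈ ringCenter A) (hαu : ∃ β : A, α * β = 1 ∧ β * α = 1) (hαs : star α = α) (x y : A) :
    (⟨x, y⟩ : CD A α) ∈ assocCenter (CD A α) ↔
      ∀ u v : A,
        ((x * u) * v = x * (u * v) ∧ (u * x) * v = u * (x * v) ∧ (u * v) * x = u * (v * x) ∧
        v * (u * x) = x * (v * u) ∧ (x * u) * v = u * (v * x) ∧ (v * u) * x = (x * v) * u ∧
        v * (x * u) = (v * u) * x ∧ v * (u * x) = (v * x) * u ∧ x * (u * v) = u * (x * v) ∧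
        (u * x) * v = (u * v) * x ∧ v * (x * u) = (x * v) * u ∧ x * (v * u) = (v * x) * u) ∧
        ((u * y) * v = y * (v * u) ∧ (u * y) * v = (y * v) * u ∧ y * (v * u) = u * (y * v) ∧
        v * (y * u) = y * (u * v) ∧ (y * u) * v = (v * y) * u ∧ y * (u * v) = (v * y) * u ∧
        v * (u * y) = (u * v) * y ∧ v * (u * y) = u * (v * y) ∧ (v * u) * y = u * (v * y) ∧
        (y * u) * v = (v * u) * y ∧ v * (y * u) = u * (y * v) ∧ (u * v) * y = (y * v) * u) := by
  obtain ⟨β, hβ1, hβ2⟩ := hαu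
  have haN := hαc.1
  have haC : ∀ t : A, α * t = t * α := fun t => sub_eq_zero.mp (hαc.2 t)
  have haL : ∀ a b : A, α * a * b = α * (a * b) := fun a b => sub_eq_zero.mp ((haN a b).1)
  have haM : ∀ a b : A, a * α * b = a * (α * b) := fun a b => sub_eq_zero.mp ((haN a b).2.1)
  have haCm : ∀ t : A, t * α = α * t := fun t => (haC t).symm
  have haR : ∀ a b : A, a * (α * b) = α * (a * b) := fun a b => by
    rw [← haM, haCm, haL]
  have hcanc : ∀ s t : A, α * s = α * t → s = t := by
    intro s t h
    have e : ∀ r : A, β * (α * r) = r := fun r => by rw [← haM, hβ2, one_mul]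
    have h2 : β * (α * s) = β * (α * t) := by rw [h]
    rwa [e, e] at h2
  constructor
  · intro hn u v
    refine ⟨⟨?_, ?_, ?_, ?_, ?_, ?_, ?_, ?_, ?_, ?_, ?_, ?_⟩,
        ⟨?_, ?_, ?_, ?_, ?_, ?_, ?_, ?_, ?_, ?_, ?_, ?_⟩⟩
    · -- x1
      have h := (hn (⟨u, 0⟩ : CD A α) ⟨v, 0⟩).1
      simp only [naAssociator, sub_eq_zero, CD.ext_iff, CD.mul_re, CD.mul_im, CD.mk_re, CD.mk_im, star_add, star_mul, star_star, mul_add, add_mul, hαs, haCm, haL, haR, zero_mul, mul_zero, star_zero, add_zero, zero_add] at h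
      exact h.1
    · -- x2
      have h := (hn (⟨u, 0⟩ : CD A α) ⟨v, 0⟩).2.1
      simp only [naAssociator, sub_eq_zero, CD.ext_iff, CD.mul_re, CD.mul_im, CD.mk_re, CD.mk_im, star_add, star_mul, star_star, mul_add, add_mul, hαs, haCm, haL, haR, zero_mul, mul_zero, star_zero, add_zero, zero_add] at h
      exact h.1
    · -- x3
      have h := (hn (⟨u, 0⟩ : CD A α) ⟨v, 0⟩).2.2
      simp only [naAssociator, sub_eq_zero, CD.ext_iff, CD.mul_re, CD.mul_im, CD.mk_re, CD.mk_im, star_add, star_mul, star_star, mul_add, add_mul, hαs, haCm, haL, haR, zero_mul, mul_zero, star_zero, add_zero, zero_add] at h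
      exact h.1
    · -- x4 : v*(u*x) = x*(v*u)
      have h := (hn (⟨0, star u⟩ : CD A α) ⟨0, v⟩).1
      simp only [naAssociator, sub_eq_zero, CD.ext_iff, CD.mul_re, CD.mul_im, CD.mk_re, CD.mk_im, star_add, star_mul, star_star, mul_add, add_mul, hαs, haCm, haL, haR, zero_mul, mul_zero, star_zero, add_zero, zero_add] at h
      exact hcanc _ _ h.1
    · -- x5 : x*u*v = u*(v*x)
      have h := (hn (⟨0, star (star u)⟩ : CD A α) ⟨0, star v⟩).2.1
      simp only [naAssociator, sub_eq_zero, CD.ext_iff, CD.mul_re, CD.mul_im, CD.mk_re, CD.mk_im, star_add, star_mul, star_star, mul_add, add_mul, hαs, haCm, haL, haR, zero_mul, mul_zero, star_zero, add_zero, zero_add] at h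
      exact star_injective (by simp only [star_mul, star_star]; exact hcanc _ _ h.1)
    · -- x6 : v*u*x = x*v*u
      have h := (hn (⟨0, star u⟩ : CD A α) ⟨0, v⟩).2.2
      simp only [naAssociator, sub_eq_zero, CD.ext_iff, CD.mul_re, CD.mul_im, CD.mk_re, CD.mk_im, star_add, star_mul, star_star, mul_add, add_mul, hαs, haCm, haL, haR, zero_mul, mul_zero, star_zero, add_zero, zero_add] at h
      exact hcanc _ _ h.1
    · -- x7 : v*(x*u) = v*u*x
      have h := (hn (⟨u, 0⟩ : CD A α) ⟨0, star v⟩).1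
      simp only [naAssociator, sub_eq_zero, CD.ext_iff, CD.mul_re, CD.mul_im, CD.mk_re, CD.mk_im, star_add, star_mul, star_star, mul_add, add_mul, hαs, haCm, haL, haR, zero_mul, mul_zero, star_zero, add_zero, zero_add] at h
      exact star_injective (by simp only [star_mul, star_star]; exact h.2)
    · -- x8 : v*(u*x) = v*x*u
      have h := (hn (⟨u, 0⟩ : CD A α) ⟨0, star v⟩).2.1
      simp only [naAssociator, sub_eq_zero, CD.ext_iff, CD.mul_re, CD.mul_im, CD.mk_re, CD.mk_im, star_add, star_mul, star_star, mul_add, add_mul, hαs, haCm, haL, haR, zero_mul, mul_zero, star_zero, add_zero, zero_add] at h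
      exact star_injective (by simp only [star_mul, star_star]; exact h.2)
    · -- x9 : x*(u*v) = u*(x*v)
      have h := (hn (⟨star u, 0⟩ : CD A α) ⟨0, v⟩).2.2
      simp only [naAssociator, sub_eq_zero, CD.ext_iff, CD.mul_re, CD.mul_im, CD.mk_re, CD.mk_im, star_add, star_mul, star_star, mul_add, add_mul, hαs, haCm, haL, haR, zero_mul, mul_zero, star_zero, add_zero, zero_add] at h
      exact h.2
    · -- x10 : u*x*v = u*v*x
      have h := (hn (⟨0, star u⟩ : CD A α) ⟨star v, 0⟩).1
      simp only [naAssociator, sub_eq_zero, CD.ext_iff, CD.mul_re, CD.mul_im, CD.mk_re, CD.mk_im, star_add, star_mul, star_star, mul_add, add_mul, hαs, haCm, haL, haR, zero_mul, mul_zero, star_zero, add_zero, zero_add] at h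
      exact star_injective (by simp only [star_mul, star_star]; exact h.2)
    · -- x11 : v*(x*u) = x*v*u
      have h := (hn (⟨0, u⟩ : CD A α) ⟨v, 0⟩).2.1
      simp only [naAssociator, sub_eq_zero, CD.ext_iff, CD.mul_re, CD.mul_im, CD.mk_re, CD.mk_im, star_add, star_mul, star_star, mul_add, add_mul, hαs, haCm, haL, haR, zero_mul, mul_zero, star_zero, add_zero, zero_add] at h
      exact h.2
    · -- x12 : x*(v*u) = v*x*u
      have h := (hn (⟨0, u⟩ : CD A α) ⟨v, 0⟩).2.2
      simp only [naAssociator, sub_eq_zero, CD.ext_iff, CD.mul_re, CD.mul_im, CD.mk_re, CD.mk_im, star_add, star_mul, star_star, mul_add, add_mul, hαs, haCm, haL, haR, zero_mul, mul_zero, star_zero, add_zero, zero_add] at h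
      exact h.2
    · -- y1 : u*y*v = y*(v*u)
      have h := (hn (⟨u, 0⟩ : CD A α) ⟨0, star v⟩).1
      simp only [naAssociator, sub_eq_zero, CD.ext_iff, CD.mul_re, CD.mul_im, CD.mk_re, CD.mk_im, star_add, star_mul, star_star, mul_add, add_mul, hαs, haCm, haL, haR, zero_mul, mul_zero, star_zero, add_zero, zero_add] at h
      exact star_injective (by simp only [star_mul, star_star]; exact hcanc _ _ h.1)
    · -- y2 : u*y*v = y*v*u
      have h := (hn (⟨star u, 0⟩ : CD A α) ⟨0, star v⟩).2.1
      simp only [naAssociator, sub_eq_zero, CD.ext_iff, CD.mul_re, CD.mul_im, CD.mk_re, CD.mk_im, star_add, star_mul, star_star, mul_add, add_mul, hαs, haCm, haL, haR, zero_mul, mul_zero, star_zero, add_zero, zero_add] at h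
      exact star_injective (by simp only [star_mul, star_star]; exact hcanc _ _ h.1)
    · -- y3 : y*(v*u) = u*(y*v)
      have h := (hn (⟨u, 0⟩ : CD A α) ⟨0, star v⟩).2.2
      simp only [naAssociator, sub_eq_zero, CD.ext_iff, CD.mul_re, CD.mul_im, CD.mk_re, CD.mk_im, star_add, star_mul, star_star, mul_add, add_mul, hαs, haCm, haL, haR, zero_mul, mul_zero, star_zero, add_zero, zero_add] at h
      exact hcanc _ _ h.1
    · -- y4 : v*(y*u) = y*(u*v)
      have h := (hn (⟨0, star u⟩ : CD A α) ⟨star v, 0⟩).1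
      simp only [naAssociator, sub_eq_zero, CD.ext_iff, CD.mul_re, CD.mul_im, CD.mk_re, CD.mk_im, star_add, star_mul, star_star, mul_add, add_mul, hαs, haCm, haL, haR, zero_mul, mul_zero, star_zero, add_zero, zero_add] at h
      exact star_injective (by simp only [star_mul, star_star]; exact hcanc _ _ h.1)
    · -- y5 : y*u*v = v*y*u
      have h := (hn (⟨0, star u⟩ : CD A α) ⟨v, 0⟩).2.1
      simp only [naAssociator, sub_eq_zero, CD.ext_iff, CD.mul_re, CD.mul_im, CD.mk_re, CD.mk_im, star_add, star_mul, star_star, mul_add, add_mul, hαs, haCm, haL, haR, zero_mul, mul_zero, star_zero, add_zero, zero_add] at h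
      exact hcanc _ _ h.1
    · -- y6 : y*(u*v) = v*y*u
      have h := (hn (⟨0, star u⟩ : CD A α) ⟨star v, 0⟩).2.2
      simp only [naAssociator, sub_eq_zero, CD.ext_iff, CD.mul_re, CD.mul_im, CD.mk_re, CD.mk_im, star_add, star_mul, star_star, mul_add, add_mul, hαs, haCm, haL, haR, zero_mul, mul_zero, star_zero, add_zero, zero_add] at h
      exact hcanc _ _ h.1
    · -- y7 : v*(u*y) = u*v*y
      have h := (hn (⟨u, 0⟩ : CD A α) ⟨v, 0⟩).1
      simp only [naAssociator, sub_eq_zero, CD.ext_iff, CD.mul_re, CD.mul_im, CD.mk_re, CD.mk_im, star_add, star_mul, star_star, mul_add, add_mul, hαs, haCm, haL, haR, zero_mul, mul_zero, star_zero, add_zero, zero_add] at h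
      exact h.2
    · -- y8 : v*(u*y) = u*(v*y)
      have h := (hn (⟨star u, 0⟩ : CD A α) ⟨v, 0⟩).2.1
      simp only [naAssociator, sub_eq_zero, CD.ext_iff, CD.mul_re, CD.mul_im, CD.mk_re, CD.mk_im, star_add, star_mul, star_star, mul_add, add_mul, hαs, haCm, haL, haR, zero_mul, mul_zero, star_zero, add_zero, zero_add] at h
      exact h.2
    · -- y9 : v*u*y = u*(v*y)
      have h := (hn (⟨star u, 0⟩ : CD A α) ⟨star v, 0⟩).2.2
      simp only [naAssociator, sub_eq_zero, CD.ext_iff, CD.mul_re, CD.mul_im, CD.mk_re, CD.mk_im, star_add, star_mul, star_star, mul_add, add_mul, hαs, haCm, haL, haR, zero_mul, mul_zero, star_zero, add_zero, zero_add] at h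
      exact h.2
    · -- y10 : y*u*v = v*u*y
      have h := (hn (⟨0, star u⟩ : CD A α) ⟨0, v⟩).1
      simp only [naAssociator, sub_eq_zero, CD.ext_iff, CD.mul_re, CD.mul_im, CD.mk_re, CD.mk_im, star_add, star_mul, star_star, mul_add, add_mul, hαs, haCm, haL, haR, zero_mul, mul_zero, star_zero, add_zero, zero_add] at h
      exact hcanc _ _ h.2
    · -- y11 : v*(y*u) = u*(y*v)
      have h := (hn (⟨0, star u⟩ : CD A α) ⟨0, star v⟩).2.1
      simp only [naAssociator, sub_eq_zero, CD.ext_iff, CD.mul_re, CD.mul_im, CD.mk_re, CD.mk_im, star_add, star_mul, star_star, mul_add, add_mul, hαs, haCm, haL, haR, zero_mul, mul_zero, star_zero, add_zero, zero_add] at h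
      exact star_injective (by simp only [star_mul, star_star]; exact hcanc _ _ h.2)
    · -- y12 : u*v*y = y*v*u
      have h := (hn (⟨0, u⟩ : CD A α) ⟨0, star v⟩).2.2
      simp only [naAssociator, sub_eq_zero, CD.ext_iff, CD.mul_re, CD.mul_im, CD.mk_re, CD.mk_im, star_add, star_mul, star_star, mul_add, add_mul, hαs, haCm, haL, haR, zero_mul, mul_zero, star_zero, add_zero, zero_add] at h
      exact hcanc _ _ h.2
  · intro hid
    have X1 : ∀ u v : A, x * u * v = x * (u * v) := fun u v => (hid u v).1.1
    have X2 : ∀ u v : A, u * x * v = u * (x * v) := fun u v => (hid u v).1.2.1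
    have X3 : ∀ u v : A, u * v * x = u * (v * x) := fun u v => (hid u v).1.2.2.1
    have X4 : ∀ u v : A, v * (u * x) = x * (v * u) := fun u v => (hid u v).1.2.2.2.1
    have X5 : ∀ u v : A, x * u * v = u * (v * x) := fun u v => (hid u v).1.2.2.2.2.1
    have X6 : ∀ u v : A, v * u * x = x * v * u := fun u v => (hid u v).1.2.2.2.2.2.1
    have X7 : ∀ u v : A, v * (x * u) = v * u * x := fun u v => (hid u v).1.2.2.2.2.2.2.1
    have X8 : ∀ u v : A, v * (u * x) = v * x * u := fun u v => (hid u v).1.2.2.2.2.2.2.2.1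
    have X9 : ∀ u v : A, x * (u * v) = u * (x * v) := fun u v => (hid u v).1.2.2.2.2.2.2.2.2.1
    have X10 : ∀ u v : A, u * x * v = u * v * x := fun u v => (hid u v).1.2.2.2.2.2.2.2.2.2.1
    have X11 : ∀ u v : A, v * (x * u) = x * v * u := fun u v => (hid u v).1.2.2.2.2.2.2.2.2.2.2.1
    have X12 : ∀ u v : A, x * (v * u) = v * x * u := fun u v => (hid u v).1.2.2.2.2.2.2.2.2.2.2.2
    have Y1 : ∀ u v : A, u * y * v = y * (v * u) := fun u v => (hid u v).2.1
    have Y2 : ∀ u v : A, u * y * v = y * v * u := fun u v => (hid u v).2.2.1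
    have Y3 : ∀ u v : A, y * (v * u) = u * (y * v) := fun u v => (hid u v).2.2.2.1
    have Y4 : ∀ u v : A, v * (y * u) = y * (u * v) := fun u v => (hid u v).2.2.2.2.1
    have Y5 : ∀ u v : A, y * u * v = v * y * u := fun u v => (hid u v).2.2.2.2.2.1
    have Y6 : ∀ u v : A, y * (u * v) = v * y * u := fun u v => (hid u v).2.2.2.2.2.2.1
    have Y7 : ∀ u v : A, v * (u * y) = u * v * y := fun u v => (hid u v).2.2.2.2.2.2.2.1
    have Y8 : ∀ u v : A, v * (u * y) = u * (v * y) := fun u v => (hid u v).2.2.2.2.2.2.2.2.1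
    have Y9 : ∀ u v : A, v * u * y = u * (v * y) := fun u v => (hid u v).2.2.2.2.2.2.2.2.2.1
    have Y10 : ∀ u v : A, y * u * v = v * u * y := fun u v => (hid u v).2.2.2.2.2.2.2.2.2.2.1
    have Y11 : ∀ u v : A, v * (y * u) = u * (y * v) := fun u v => (hid u v).2.2.2.2.2.2.2.2.2.2.2.1
    have Y12 : ∀ u v : A, u * v * y = y * v * u := fun u v => (hid u v).2.2.2.2.2.2.2.2.2.2.2.2
    have Y4s : ∀ u v : A, u * star y * v = v * u * star y := fun u v =>
      star_injective (by simp only [star_mul, star_star]; exact Y4 (star u) (star v))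
    have Y1s : ∀ u v : A, v * (star y * u) = u * v * star y := fun u v =>
      star_injective (by simp only [star_mul, star_star]; exact Y1 (star u) (star v))
    have X7s : ∀ u v : A, u * star x * v = star x * (u * v) := fun u v =>
      star_injective (by simp only [star_mul, star_star]; exact X7 (star u) (star v))
    have X10s : ∀ u v : A, v * (star x * u) = star x * (v * u) := fun u v =>
      star_injective (by simp only [star_mul, star_star]; exact X10 (star u) (star v))
    have Y2s : ∀ u v : A, v * (star y * u) = u * (v * star y) := fun u v =>
      star_injective (by simp only [star_mul, star_star]; exact Y2 (star u) (star v))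
    have X5s : ∀ u v : A, v * (u * star x) = star x * v * u := fun u v =>
      star_injective (by simp only [star_mul, star_star]; exact X5 (star u) (star v))
    have X8s : ∀ u v : A, star x * u * v = u * (star x * v) := fun u v =>
      star_injective (by simp only [star_mul, star_star]; exact X8 (star u) (star v))
    have Y11s : ∀ u v : A, u * star y * v = v * star y * u := fun u v =>
      star_injective (by simp only [star_mul, star_star]; exact Y11 (star u) (star v))
    rintro ⟨c, d⟩ ⟨e, f⟩
    refine ⟨?_, ?_, ?_⟩ <;> (simp only [naAssociator, sub_eq_zero, CD.ext_iff, CD.mul_re, CD.mul_im, CD.mk_re, CD.mk_im, star_add, star_mul, star_star, mul_add, add_mul, hαs, haCm, haL, haR]; refine ⟨?_, ?_⟩)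
    · rw [X1, X4, Y4s, Y1s]; abel
    · rw [X7s, X10s, Y7, Y10]; abel
    · rw [X2, Y5, Y2s, X5s]; abel
    · rw [X8s, Y11s, Y8, X11]; abel
    · rw [X3, X6, Y3, Y6]; abel
    · rw [Y9, Y12, X9, X12]; abel
end

section
/- Let A be a unital, not necessarily associative ring and let y ∈ A. The twelve identities (uy)v = y(vu), (uy)v = (yv)u, y(vu) = u(yv), v(yu) = y(uv), (yu)v = (vy)u, y(uv) = (vy)u, v(uy) = (uv)y, v(uy) = u(vy), (vu)y = u(vy), (yu)v = (vu)y, v(yu) = u(yv), (uv)y = (yv)u hold for all u,v ∈ A if and only if y ∈ Z(A) and y[u,v] = 0 for all u,v ∈ A. -/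
set_option linter.unusedSectionVars false

theorem stmt7 {A : Type*} [NonAssocRing A] (y : A) :
    (∀ u v : A,
        (u * y) * v = y * (v * u) ∧ (u * y) * v = (y * v) * u ∧ y * (v * u) = u * (y * v) ∧
        v * (y * u) = y * (u * v) ∧ (y * u) * v = (v * y) * u ∧ y * (u * v) = (v * y) * u ∧
        v * (u * y) = (u * v) * y ∧ v * (u * y) = u * (v * y) ∧ (v * u) * y = u * (v * y) ∧
        (y * u) * v = (v * u) * y ∧ v * (y * u) = u * (y * v) ∧ (u * v) * y = (y * v) * u) ↔
      (y ∈ ringCenter A ∧ ∀ u v : A, y * naCommutator u v = 0) := by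
  constructor
  · intro h
    have h1 : ∀ u v : A, (u * y) * v = y * (v * u) := fun u v => (h u v).1
    have h2 : ∀ u v : A, (u * y) * v = (y * v) * u := fun u v => (h u v).2.1
    have h3 : ∀ u v : A, y * (v * u) = u * (y * v) := fun u v => (h u v).2.2.1
    have h6 : ∀ u v : A, y * (u * v) = (v * y) * u := fun u v => (h u v).2.2.2.2.2.1
    have h8 : ∀ u v : A, v * (u * y) = u * (v * y) := fun u v => (h u v).2.2.2.2.2.2.2.1
    have h9 : ∀ u v : A, (v * u) * y = u * (v * y) := fun u v => (h u v).2.2.2.2.2.2.2.2.1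
    have yc : ∀ a : A, y * a = a * y := by
      intro a
      have := h1 a 1
      simpa using this.symm
    have A1 : ∀ a b : A, (y * a) * b = y * (a * b) := by
      intro a b
      calc (y * a) * b = (a * y) * b := by rw [yc]
        _ = (y * b) * a := h2 a b
        _ = (b * y) * a := by rw [yc]
        _ = y * (a * b) := (h6 a b).symm
    have A2 : ∀ a b : A, (a * y) * b = a * (y * b) := by
      intro a b
      rw [h1 a b, h3 a b]
    have A3 : ∀ a b : A, (a * b) * y = a * (b * y) := by
      intro a b
      rw [h9 b a, ← h8 b a]
    have C : ∀ a b : A, y * (a * b) = y * (b * a) := by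
      intro a b
      rw [← h1 a b, ← yc a, A1]
    refine ⟨⟨fun a b => ?_, fun a => ?_⟩, fun u v => ?_⟩
    · exact ⟨sub_eq_zero.mpr (A1 a b), sub_eq_zero.mpr (A2 a b), sub_eq_zero.mpr (A3 a b)⟩
    · exact sub_eq_zero.mpr (yc a)
    · simp only [naCommutator, mul_sub, C u v, sub_self]
  · rintro ⟨⟨hN, hK⟩, hc⟩
    have yc : ∀ a : A, a * y = y * a := fun a => (sub_eq_zero.mp (hK a)).symm
    have A1 : ∀ a b : A, (y * a) * b = y * (a * b) := fun a b =>
      sub_eq_zero.mp (hN a b).1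
    have A2 : ∀ a b : A, a * (y * b) = y * (a * b) := fun a b => by
      rw [← sub_eq_zero.mp (hN a b).2.1, yc a, A1]
    have C : ∀ a b : A, y * (a * b) = y * (b * a) := fun a b => by
      have := hc a b
      simp only [naCommutator, mul_sub, sub_eq_zero] at this
      exact this
    intro u v
    refine ⟨?_, ?_, ?_, ?_, ?_, ?_, ?_, ?_, ?_, ?_, ?_, ?_⟩ <;>
      simp only [yc, A1, A2] <;> first | rfl | exact C u v | exact C v u
end

section
/- Let A be a unital, not necessarily associative ring with involution *, let α be an invertible element of Z(A) with α* = α, and let R = (A,α) be the Cayley–Dickson ring. Then R is associative (i.e., (xy)z = x(yz) for all x,y,z ∈ R) if and only if A is associative and commutative. -/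
set_option linter.unusedSectionVars false

theorem stmt8 {A : Type*} [NonAssocRing A] [StarRing A] {α : A}
    (hαc : α ∈ ringCenter A) (hαu : ∃ β : A, α * β = 1 ∧ β * α = 1) (hαs : star α = α) :
    (∀ x y z : CD A α, x * y * z = x * (y * z)) ↔
      ((∀ a b c : A, a * b * c = a * (b * c)) ∧ ∀ a b : A, a * b = b * a) := by
  constructor
  · intro h
    constructor
    · intro a b c
      have := congrArg CD.re (h ⟨a,0⟩ ⟨b,0⟩ ⟨c,0⟩)
      simpa using this
    · intro a b
      have h1 := congrArg CD.im (h ⟨a,0⟩ ⟨b,0⟩ ⟨0,1⟩)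
      simp at h1
      have := congrArg star h1
      simpa [star_mul, star_star] using this
  · rintro ⟨hassoc, hcomm⟩
    letI : CommRing A :=
      { (inferInstance : NonAssocRing A) with
        mul_assoc := hassoc, mul_comm := hcomm }
    intro x y z
    ext <;>
      simp [mul_add, add_mul, star_mul, star_add, star_star, hαs] <;>
      ring
end

section
/- Let A be a unital, not necessarily associative ring, let B be a subring of Z(A) and let I be an essential ideal of the commutative associative ring B. If for every nonzero a ∈ A there exists b ∈ B with ba ≠ 0 and ba ∈ B, then for every nonzero a ∈ A there exists b ∈ B with ba ≠ 0 and ba ∈ I. -/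
set_option linter.unusedSectionVars false

theorem stmt9 {A : Type*} [NonAssocRing A] (B I : Set A)
    (hBsub : B ⊆ ringCenter A) (hB1 : (1 : A) ∈ B)
    (hBadd : ∀ x ∈ B, ∀ y ∈ B, x + y ∈ B) (hBneg : ∀ x ∈ B, -x ∈ B)
    (hBmul : ∀ x ∈ B, ∀ y ∈ B, x * y ∈ B)
    (hIsub : I ⊆ B) (hI0 : (0 : A) ∈ I)
    (hIadd : ∀ x ∈ I, ∀ y ∈ I, x + y ∈ I)
    (hIsmul : ∀ x ∈ B, ∀ y ∈ I, x * y ∈ I)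
    (hIess : EssentialIn I B)
    (h : ∀ a : A, a ≠ 0 → ∃ b ∈ B, b * a ≠ 0 ∧ b * a ∈ B) :
    ∀ a : A, a ≠ 0 → ∃ b ∈ B, b * a ≠ 0 ∧ b * a ∈ I := by
  intro a ha
  obtain ⟨b, hb, hba, hbaB⟩ := h a ha
  obtain ⟨d, hd, hdba, hdbaI⟩ := hIess (b * a) hbaB hba
  have hassoc : d * b * a = d * (b * a) := by
    have := ((hBsub hb).1 d a).2.1
    simpa [naAssociator, sub_eq_zero] using this
  exact ⟨d * b, hBmul d hd b hb, by rw [hassoc]; exact hdba, by rw [hassoc]; exact hdbaI⟩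
end

section
/- Let K be a commutative associative unital ring, let a, b ∈ K, let Q = ℍ[K,a,b] be the generalized quaternion algebra with basis 1, i, j, k, i² = a, j² = b, ij = −ji = k, and let N = {x ∈ K : 2x = 0}. Set B = {x₀ + x₁i + x₂j + x₃k : x₀ ∈ K, x₁,x₂,x₃ ∈ N} and I = {x₀ + x₁i + x₂j + x₃k : x₀,x₁,x₂,x₃ ∈ N}. Then the following are equivalent: (1) for every nonzero q ∈ B there exists p ∈ B with pq ≠ 0 and pq ∈ I; (2) N is an essential ideal of K, i.e., for every nonzero x ∈ K there exists y ∈ K with yx ≠ 0 and yx ∈ N. -/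
set_option linter.unusedSectionVars false

/-! Multiplication by a scalar `y ∈ K`, on either side, acts coordinatewise on `ℍ[K,a,b]`.
If `B` is essential over `I`, a witness `d` for the nonzero scalar `x` has `d x = x • d ≠ 0` with
all coordinates in `N`, so one coordinate `c` of `d` gives `c x ≠ 0` in `N`. Conversely, for
`q ∈ B` one multiplies by a scalar `y` with `y q.re` nonzero in `N` (or by `1` when `q.re = 0`);
the imaginary coordinates of `y q` stay in `N` since those of `q` already lie there. -/

open Quaternion

namespace QuaternionAlgebra

variable {R : Type*} [CommRing R] {c₁ c₂ c₃ : R}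

theorem ne_zero_iff {q : ℍ[R,c₁,c₂,c₃]} :
    q ≠ 0 ↔ q.re ≠ 0 ∨ q.imI ≠ 0 ∨ q.imJ ≠ 0 ∨ q.imK ≠ 0 := by
  simp only [ne_eq, QuaternionAlgebra.ext_iff]
  tauto

variable (N : Ideal R)

def withCoeffsIn : Set ℍ[R,c₁,c₂,c₃] :=
  {q | q.re ∈ N ∧ q.imI ∈ N ∧ q.imJ ∈ N ∧ q.imK ∈ N}

def withImCoeffsIn : Set ℍ[R,c₁,c₂,c₃] :=
  {q | q.imI ∈ N ∧ q.imJ ∈ N ∧ q.imK ∈ N}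

theorem coe_mem_withImCoeffsIn (x : R) : (x : ℍ[R,c₁,c₂,c₃]) ∈ withImCoeffsIn N :=
  ⟨N.zero_mem, N.zero_mem, N.zero_mem⟩

theorem exists_mul_ne_zero_mem_of_essentialIn
    (h : EssentialIn (withCoeffsIn N) (withImCoeffsIn N : Set ℍ[R,c₁,c₂,c₃])) (x : R)
    (hx : x ≠ 0) : ∃ y : R, y * x ≠ 0 ∧ y * x ∈ N := by
  obtain ⟨d, -, hd0, hdN⟩ := h x (coe_mem_withImCoeffsIn N x) (coe_injective.ne hx)
  rw [mul_coe_eq_smul] at hd0 hdN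
  obtain ⟨hre, hi, hj, hk⟩ := hdN
  rcases ne_zero_iff.mp hd0 with h0 | h0 | h0 | h0
  · exact ⟨d.re, by rwa [mul_comm], by rwa [mul_comm]⟩
  · exact ⟨d.imI, by rwa [mul_comm], by rwa [mul_comm]⟩
  · exact ⟨d.imJ, by rwa [mul_comm], by rwa [mul_comm]⟩
  · exact ⟨d.imK, by rwa [mul_comm], by rwa [mul_comm]⟩

theorem essentialIn_withCoeffsIn (hN : ∀ x : R, x ≠ 0 → ∃ y : R, y * x ≠ 0 ∧ y * x ∈ N) :
    EssentialIn (withCoeffsIn N) (withImCoeffsIn N : Set ℍ[R,c₁,c₂,c₃]) := by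
  rintro q ⟨hi, hj, hk⟩ hq
  obtain ⟨y, hy0, hyN⟩ : ∃ y : R, y • q ≠ 0 ∧ y * q.re ∈ N := by
    by_cases hre : q.re = 0
    · exact ⟨1, by rwa [one_smul], by simp [hre]⟩
    · obtain ⟨y, hy0, hyN⟩ := hN _ hre
      exact ⟨y, fun h => hy0 (congrArg re h), hyN⟩
  refine ⟨y, coe_mem_withImCoeffsIn N y, ?_, ?_⟩
  · rwa [coe_mul_eq_smul]
  · rw [coe_mul_eq_smul]
    exact ⟨hyN, N.mul_mem_left y hi, N.mul_mem_left y hj, N.mul_mem_left y hk⟩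

theorem essentialIn_withCoeffsIn_iff :
    EssentialIn (withCoeffsIn N) (withImCoeffsIn N : Set ℍ[R,c₁,c₂,c₃]) ↔
      ∀ x : R, x ≠ 0 → ∃ y : R, y * x ≠ 0 ∧ y * x ∈ N :=
  ⟨exists_mul_ne_zero_mem_of_essentialIn N, essentialIn_withCoeffsIn N⟩

end QuaternionAlgebra

open Quaternion in
theorem stmt13 {K : Type*} [CommRing K] (a b : K) :
    EssentialIn
        {q : ℍ[K, a, b] | 2 * q.re = 0 ∧ 2 * q.imI = 0 ∧ 2 * q.imJ = 0 ∧ 2 * q.imK = 0}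
        {q : ℍ[K, a, b] | 2 * q.imI = 0 ∧ 2 * q.imJ = 0 ∧ 2 * q.imK = 0} ↔
      ∀ x : K, x ≠ 0 → ∃ y : K, y * x ≠ 0 ∧ 2 * (y * x) = 0 :=
  -- `x ∈ torsionBy K K 2` unfolds to `2 * x = 0`, so the sets above are the `withCoeffsIn` ones.
  QuaternionAlgebra.essentialIn_withCoeffsIn_iff (Submodule.torsionBy K K 2)
end

section
/- Let K be a commutative associative unital ring and let a, b be invertible elements of K. The generalized quaternion algebra ℍ[K,a,b] is non-commutative and centrally essential if and only if the ideal Ann_K(2) = {x ∈ K : 2x = 0} is an essential ideal of K and Ann_K(2) ≠ K. -/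
set_option linter.unusedSectionVars false

/-! For a unit `a`, commuting with `i` and `j` shows that a quaternion is central exactly when its
three imaginary coordinates lie in `Ann_K(2)`; in particular `ℍ[K,a,b]` is commutative iff
`2 = 0`, and scalars are central. If `Ann_K(2)` is essential, a nonzero quaternion is made central
and kept nonzero by a scalar multiplier, found one coordinate at a time. Conversely, for `x ≠ 0`
a central `z` with `z * (x • i)` central and nonzero has coordinates of the form `y * x` with
`2 * (y * x) = 0`. -/

theorem mem_ringCenter_iff_s14 {R : Type*} [Ring R] {x : R} : x ∈ ringCenter R ↔ x ∈ Set.center R := by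
  simp [ringCenter, assocCenter, commCenter, naAssociator, naCommutator, mul_assoc,
    Semigroup.mem_center_iff, sub_eq_zero, eq_comm]

theorem exists_smul_ne_zero_forall_smul_mem {R M ι : Type*} [Semiring R] [AddCommMonoid M]
    [Module R M] [Finite ι] {I : Submodule R M}
    (hI : ∀ m : M, m ≠ 0 → ∃ y : R, y • m ≠ 0 ∧ y • m ∈ I) {v : ι → M} (hv : v ≠ 0) :
    ∃ c : R, c • v ≠ 0 ∧ ∀ i, c • v i ∈ I := by
  classical
  have := Fintype.ofFinite ι
  suffices ∀ s : Finset ι, ∃ c : R, c • v ≠ 0 ∧ ∀ i ∈ s, c • v i ∈ I by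
    simpa using this Finset.univ
  intro s
  induction s using Finset.induction_on with
  | empty => exact ⟨1, by simpa using hv, by simp⟩
  | insert j s _ ih =>
    obtain ⟨c, hc, hcI⟩ := ih
    by_cases hj : c • v j ∈ I
    · exact ⟨c, hc, Finset.forall_mem_insert _ _ _ |>.2 ⟨hj, hcI⟩⟩
    obtain ⟨y, hy, hyI⟩ := hI (c • v j) fun h => hj (h ▸ I.zero_mem)
    refine ⟨y * c, fun h => hy ?_, Finset.forall_mem_insert _ _ _ |>.2 ⟨?_, fun i hi => ?_⟩⟩
    · simpa [mul_smul] using congrFun h j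
    · rwa [mul_smul]
    · rw [mul_smul]; exact I.smul_mem y (hcI i hi)

namespace QuaternionAlgebra

open Quaternion

variable {K : Type*} [CommRing K] {a b : K}

theorem mem_center_of_two_mul_im_eq_zero {q : ℍ[K, a, b]} (hI : 2 * q.imI = 0)
    (hJ : 2 * q.imJ = 0) (hK : 2 * q.imK = 0) : q ∈ Set.center ℍ[K, a, b] := by
  refine Semigroup.mem_center_iff.2 fun p => QuaternionAlgebra.ext ?_ ?_ ?_ ?_ <;>
    simp only [re_mul, imI_mul, imJ_mul, imK_mul]
  · ring
  · linear_combination (b * p.imK) * hJ - (b * p.imJ) * hK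
  · linear_combination (a * p.imI) * hK - (a * p.imK) * hI
  · linear_combination p.imI * hJ - p.imJ * hI

theorem mem_center_iff (ha : IsUnit a) {q : ℍ[K, a, b]} :
    q ∈ Set.center ℍ[K, a, b] ↔ 2 * q.imI = 0 ∧ 2 * q.imJ = 0 ∧ 2 * q.imK = 0 := by
  refine ⟨fun hq => ?_, fun ⟨hI, hJ, hK⟩ => mem_center_of_two_mul_im_eq_zero hI hJ hK⟩
  have hi := Semigroup.mem_center_iff.1 hq ⟨0, 1, 0, 0⟩
  have hj := Semigroup.mem_center_iff.1 hq ⟨0, 0, 1, 0⟩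
  have hiJ := congrArg imJ hi
  have hiK := congrArg imK hi
  have hjK := congrArg imK hj
  simp only [imJ_mul, imK_mul] at hiJ hiK hjK
  refine ⟨by linear_combination -hjK, by linear_combination hiK, ha.mul_left_cancel ?_⟩
  linear_combination hiJ

theorem forall_mul_comm_iff : (∀ p q : ℍ[K, a, b], p * q = q * p) ↔ (2 : K) = 0 := by
  refine ⟨fun h => ?_, fun h p q => ?_⟩
  · have hk := congrArg imK (h ⟨0, 1, 0, 0⟩ ⟨0, 0, 1, 0⟩)
    simp only [imK_mul] at hk
    linear_combination hk
  · exact (Semigroup.mem_center_iff.1 <|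
      mem_center_of_two_mul_im_eq_zero (q := q) (by simp [h]) (by simp [h]) (by simp [h])) p

theorem isCentrallyEssential_iff (ha : IsUnit a) :
    IsCentrallyEssential ℍ[K, a, b] ↔ ∀ x : K, x ≠ 0 → ∃ y : K, y * x ≠ 0 ∧ 2 * (y * x) = 0 := by
  constructor
  · intro h x hx
    -- Multiplying by `x • i` moves the real part of `z`, on which centrality puts no constraint,
    -- into the `i`-coordinate, which is 2-torsion because `z * (x • i)` is central.
    obtain ⟨z, hz, hzr, hzrc⟩ := h (x • ⟨0, 1, 0, 0⟩) fun h0 => hx (by simpa using congrArg imI h0)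
    have hzr_eq : z * x • ⟨0, 1, 0, 0⟩ =
        ⟨a * z.imI * x, z.re * x, -(a * z.imK) * x, -z.imJ * x⟩ := by
      ext <;> simp
    rw [hzr_eq] at hzr hzrc
    rw [mem_ringCenter_iff_s14, mem_center_iff ha] at hz hzrc
    by_contra! hcon
    refine hzr (QuaternionAlgebra.ext ?_ ?_ ?_ ?_) <;> refine not_imp_not.1 (hcon _) ?_
    · linear_combination (a * x) * hz.1
    · exact hzrc.1
    · linear_combination (-(a * x)) * hz.2.2
    · linear_combination (-x) * hz.2.1
  · intro h r hr
    obtain ⟨c, hc, hcI⟩ := exists_smul_ne_zero_forall_smul_mem (I := Submodule.torsionBy K K 2)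
      (fun x hx => by simpa using h x hx) ((linearEquivTuple a 0 b).map_ne_zero_iff.2 hr)
    rw [← map_smul, LinearEquiv.map_ne_zero_iff] at hc
    have htors (i : Fin 4) := (Submodule.mem_torsionBy_iff _ _).1 (hcI i)
    refine ⟨c, ?_, by rwa [coe_mul_eq_smul], ?_⟩ <;> rw [mem_ringCenter_iff_s14]
    · exact Set.algebraMap_mem_center c
    · rw [coe_mul_eq_smul]
      exact mem_center_of_two_mul_im_eq_zero (by simpa using htors 1) (by simpa using htors 2)
        (by simpa using htors 3)

end QuaternionAlgebra

open Quaternion in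
theorem stmt14_general {K : Type*} [CommRing K] {a b : K} (ha : IsUnit a) :
    ((¬ ∀ p q : ℍ[K, a, b], p * q = q * p) ∧ IsCentrallyEssential (ℍ[K, a, b])) ↔
      ((∀ x : K, x ≠ 0 → ∃ y : K, y * x ≠ 0 ∧ 2 * (y * x) = 0) ∧
        {x : K | 2 * x = 0} ≠ Set.univ) := by
  have h2 : {x : K | 2 * x = 0} = Set.univ ↔ (2 : K) = 0 := by
    rw [Set.eq_univ_iff_forall]
    exact ⟨fun h => by simpa using h 1, fun h x => by simp [h]⟩
  rw [QuaternionAlgebra.forall_mul_comm_iff, QuaternionAlgebra.isCentrallyEssential_iff ha, ne_eq,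
    h2, and_comm]

open Quaternion in
theorem stmt14 {K : Type*} [CommRing K] {a b : K} (ha : IsUnit a) (hb : IsUnit b) :
    ((¬ ∀ p q : ℍ[K, a, b], p * q = q * p) ∧ IsCentrallyEssential (ℍ[K, a, b])) ↔
      ((∀ x : K, x ≠ 0 → ∃ y : K, y * x ≠ 0 ∧ 2 * (y * x) = 0) ∧
        {x : K | 2 * x = 0} ≠ Set.univ) :=
  stmt14_general ha
end
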